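/- arXiv:1504.08341 — 8 statements merged into one kernel-verified Lean document; each statement's English description precedes it below -/
import Mathlib

section
/- Let l, n ≥ 1 and let σ₁, …, σ_{(n+2)(n+1)^{l−1}} be distinct elements of {0,1}^n. Then there exist an index i ∈ {1,…,n} and indices 1 ≤ k₁ < k₂ < ⋯ < k_{2^l} ≤ (n+2)(n+1)^{l−1} such that σ_{k_j}(i) = 0 for all odd j and σ_{k_j}(i) = 1 for all even j. -/
/-!
Induction on `l`. For `l = 1`: if no coordinate ever goes from `0` to `1` along the sequence,
every coordinate is nonincreasing, so the distinct `σ`'s form a strictly decreasing chain in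
`{0,1}^n`, which has at most `n + 1` elements. For the step, cut the sequence into `n + 1`
consecutive blocks of length `(n+2)(n+1)^(l-1)`. Each block zigzags `2^l` times in some
coordinate; by pigeonhole two blocks use the same coordinate, and since `2^l` is even the two
zigzags concatenate to one of length `2^(l+1)`.
-/

open Finset Function

section Zigzag

variable {ι κ : Type*}

def HasZigzag [Preorder ι] (σ : ι → κ → Fin 2) (i : κ) (L : ℕ) : Prop :=
  ∃ k : Fin L → ι, StrictMono k ∧ ∀ j : Fin L, σ (k j) i = if Even (j : ℕ) then 0 else 1

lemma strictMono_sum_val [Fintype κ] : StrictMono fun x : κ → Fin 2 => ∑ i, (x i : ℕ) := by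
  intro x y hxy
  obtain ⟨hle, i, hlt⟩ := Pi.lt_def.mp hxy
  exact sum_lt_sum (fun i _ => hle i) ⟨i, mem_univ i, hlt⟩

lemma card_le_card_add_one_of_strictAnti [LinearOrder ι] [Fintype ι] [Fintype κ]
    {σ : ι → κ → Fin 2} (hσ : StrictAnti σ) : Fintype.card ι ≤ Fintype.card κ + 1 := by
  have hbound (a : ι) : ∑ i, (σ a i : ℕ) < Fintype.card κ + 1 := Nat.lt_succ_of_le <|
    (sum_le_sum fun i _ => Nat.le_of_lt_succ (σ a i).isLt).trans_eq (by simp)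
  simpa using Fintype.card_le_of_injective (fun a => (⟨_, hbound a⟩ : Fin (Fintype.card κ + 1)))
    fun a b h => (strictMono_sum_val.comp_strictAnti hσ).injective (Fin.mk.inj h)

lemma exists_lt_zero_one_of_injective [LinearOrder ι] [Fintype ι] [Fintype κ]
    {σ : ι → κ → Fin 2} (hσ : Injective σ) (hcard : Fintype.card κ + 2 ≤ Fintype.card ι) :
    ∃ i a b, a < b ∧ σ a i = 0 ∧ σ b i = 1 := by
  by_contra! h
  have hanti : Antitone σ := fun a b hab i => by
    rcases hab.lt_or_eq with hab | rfl
    · have key : ∀ x y : Fin 2, (x = 0 → y ≠ 1) → y ≤ x := by decide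
      exact key _ _ (h i a b hab)
    · rfl
  have := card_le_card_add_one_of_strictAnti (hanti.strictAnti_of_injective hσ)
  omega

lemma exists_hasZigzag_two [LinearOrder ι] [Fintype ι] [Fintype κ]
    {σ : ι → κ → Fin 2} (hσ : Injective σ) (hcard : Fintype.card κ + 2 ≤ Fintype.card ι) :
    ∃ i, HasZigzag σ i 2 := by
  obtain ⟨i, a, b, hab, ha, hb⟩ := exists_lt_zero_one_of_injective hσ hcard
  refine ⟨i, ![a, b], Fin.strictMono_iff_lt_succ.mpr fun j => ?_, fun j => ?_⟩
  · fin_cases j; simpa using hab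
  · fin_cases j <;> simp [ha, hb]

lemma HasZigzag.append [Preorder ι] {α β : Type*} [Preorder α] [Preorder β]
    {σ : ι → κ → Fin 2} {i : κ} {L : ℕ} (hL : Even L) {e₁ : α → ι} {e₂ : β → ι}
    (he₁ : StrictMono e₁) (he₂ : StrictMono e₂) (h₁₂ : ∀ a b, e₁ a < e₂ b)
    (h₁ : HasZigzag (σ ∘ e₁) i L) (h₂ : HasZigzag (σ ∘ e₂) i L) : HasZigzag σ i (L + L) := by
  obtain ⟨k₁, hk₁, hz₁⟩ := h₁
  obtain ⟨k₂, hk₂, hz₂⟩ := h₂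
  refine ⟨Fin.append (e₁ ∘ k₁) (e₂ ∘ k₂), fun x y => ?_, Fin.addCases ?_ ?_⟩
  · refine Fin.addCases (fun a => ?_) (fun a => ?_) x <;>
      refine Fin.addCases (fun b => ?_) (fun b => ?_) y <;>
      simp only [Fin.append_left, Fin.append_right, comp_apply, Fin.lt_def, Fin.val_castAdd,
        Fin.val_natAdd] <;> intro hxy
    · exact he₁ (hk₁ hxy)
    · exact h₁₂ _ _
    · omega
    · exact he₂ (hk₂ (Nat.lt_of_add_lt_add_left hxy))
  · intro j
    rw [Fin.append_left]
    simpa using hz₁ j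
  · intro j
    rw [Fin.append_right]
    simpa [Nat.even_add, hL] using hz₂ j

end Zigzag

/-- The `b`-th of `c` consecutive blocks of length `M` in `Fin m`: `t ↦ b * M + t`. -/
def finBlock {c M m : ℕ} (h : c * M ≤ m) (b : Fin c) (t : Fin M) : Fin m :=
  Fin.castLE h (finProdFinEquiv (b, t))

lemma finBlock_strictMono {c M m : ℕ} (h : c * M ≤ m) (b : Fin c) :
    StrictMono (finBlock h b) := fun t₁ t₂ ht => by
  simp only [finBlock, Fin.lt_def, Fin.val_castLE, finProdFinEquiv_apply_val] at ht ⊢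
  omega

lemma finBlock_lt_finBlock {c M m : ℕ} (h : c * M ≤ m) {b₁ b₂ : Fin c} (hb : b₁ < b₂)
    (t₁ t₂ : Fin M) : finBlock h b₁ t₁ < finBlock h b₂ t₂ := by
  simp only [finBlock, Fin.lt_def, Fin.val_castLE, finProdFinEquiv_apply_val]
  calc (t₁ : ℕ) + M * b₁ < M * (b₁ + 1) := by rw [mul_add_one]; omega
    _ ≤ M * b₂ := Nat.mul_le_mul_left M hb
    _ ≤ t₂ + M * b₂ := Nat.le_add_left _ _

theorem exists_hasZigzag_of_injective {κ : Type*} [Fintype κ] (l : ℕ) {m : ℕ}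
    (hm : (Fintype.card κ + 2) * (Fintype.card κ + 1) ^ l ≤ m) {σ : Fin m → κ → Fin 2}
    (hσ : Injective σ) : ∃ i, HasZigzag σ i (2 ^ (l + 1)) := by
  induction l generalizing m σ with
  | zero => exact exists_hasZigzag_two hσ (by simpa using hm)
  | succ l ih =>
    set M := (Fintype.card κ + 2) * (Fintype.card κ + 1) ^ l
    have hblocks : (Fintype.card κ + 1) * M ≤ m := by
      simpa only [M, pow_succ, mul_comm, mul_left_comm, mul_assoc] using hm
    have hblock (b : Fin (Fintype.card κ + 1)) : ∃ i, HasZigzag (σ ∘ finBlock hblocks b) i _ :=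
      ih le_rfl (hσ.comp (finBlock_strictMono hblocks b).injective)
    choose I hI using hblock
    obtain ⟨b₁, b₂, hne, hI₁₂⟩ := Fintype.exists_ne_map_eq_of_card_lt I (by simp)
    wlog hlt : b₁ < b₂ generalizing b₁ b₂
    · exact this b₂ b₁ hne.symm hI₁₂.symm (hne.lt_or_gt.resolve_left hlt)
    refine ⟨I b₁, pow_succ 2 (l + 1) ▸ mul_two (2 ^ (l + 1)) ▸ ?_⟩
    exact HasZigzag.append (Even.pow_of_ne_zero even_two l.succ_ne_zero)
      (finBlock_strictMono hblocks b₁) (finBlock_strictMono hblocks b₂)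
      (finBlock_lt_finBlock hblocks hlt) (hI b₁) (hI₁₂ ▸ hI b₂)

theorem zigzag_combinatorial_general (l n : ℕ) (hl : 1 ≤ l)
    (σ : Fin ((n + 2) * (n + 1) ^ (l - 1)) → Fin n → Fin 2)
    (hσ : Function.Injective σ) :
    ∃ i : Fin n, ∃ k : Fin (2 ^ l) → Fin ((n + 2) * (n + 1) ^ (l - 1)),
      StrictMono k ∧
        ∀ j : Fin (2 ^ l), σ (k j) i = if Even (j : ℕ) then 0 else 1 := by
  obtain ⟨l, rfl⟩ : ∃ l', l = l' + 1 := ⟨l - 1, by omega⟩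
  exact exists_hasZigzag_of_injective l (by simp) hσ

/-- Zigzag combinatorial lemma: given `(n+2)(n+1)^(l-1)` distinct elements of
`{0,1}^n`, there are a coordinate `i` and `2^l` increasing indices along which the
`i`-th coordinate alternates, starting with `0`.  (Indices `j` here are 0-based, so
`j` even corresponds to odd position `j+1` in the 1-based statement.) -/
theorem zigzag_combinatorial (l n : ℕ) (hl : 1 ≤ l) (hn : 1 ≤ n)
    (σ : Fin ((n + 2) * (n + 1) ^ (l - 1)) → Fin n → Fin 2)
    (hσ : Function.Injective σ) :
    ∃ i : Fin n, ∃ k : Fin (2 ^ l) → Fin ((n + 2) * (n + 1) ^ (l - 1)),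
      StrictMono k ∧
        ∀ j : Fin (2 ^ l), σ (k j) i = if Even (j : ℕ) then 0 else 1 :=
  zigzag_combinatorial_general l n hl σ hσ
end

section
/- Let X be a compact metric space, f : X → X a continuous map, and 𝒜 a collection of subsets of X having an independence set with positive density. Then for every n ∈ ℕ there is a finite set F ⊆ ℕ with |F| = n such that the collection 𝒜_F = { ⋂_{i ∈ F} f^{−i}(Y_i) : (Y_i)_{i∈F} ∈ 𝒜^F } also has an independence set with positive density. -/
open scoped Classical

/-- The lower density of a set of natural numbers. -/
noncomputable def lowerDensity (A : Set ℕ) : ℝ :=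
  Filter.atTop.liminf fun n : ℕ =>
    (((Finset.Icc 1 n).filter (fun m => m ∈ A)).card : ℝ) / n

/-- `I` is an independence set for the collection `𝒜` with respect to `f`:
for every finite `J ⊆ I` and every choice `Y_j ∈ 𝒜` (`j ∈ J`), the
intersection `⋂_{j∈J} f^{-j}(Y_j)` is nonempty. -/
def IsIndepSet {X : Type*} (f : X → X) (𝒜 : Set (Set X)) (I : Set ℕ) : Prop :=
  ∀ J : Finset ℕ, (J : Set ℕ) ⊆ I → ∀ Y : ℕ → Set X, (∀ j ∈ J, Y j ∈ 𝒜) →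
    (⋂ j ∈ J, f^[j] ⁻¹' Y j).Nonempty

/-! Choose `K` with `n ≤ cK/2`, where `c` is a lower bound for the density of `I`. Then the blocks
`[1 + qK, 1 + (q+1)K)` containing at least `n` points of `I` have lower density `≥ c/2`, and each
contains a translate of some `n`-set `F ⊆ [0, K)`. Pigeonholing over the finitely many `F` on
windows of every length, the blocks containing a translate of one fixed `F` are dense on arbitrarily
long windows. After shrinking each window to one all of whose prefixes are dense, an ultrafilter
limit of these windows is a set `B` whose prefixes are all dense and whose finite subsets all
occur, translated, among those blocks. Along `KB` every finite configuration `KJ + F` then sits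
injectively in a translate of `I`, which is what independence of `𝒜_F` asks for. -/

open Filter Finset

noncomputable def countIn (A : Set ℕ) (a L : ℕ) : ℕ := #{i ∈ range L | a + i ∈ A}

lemma countIn_eq_sum (A : Set ℕ) (a L : ℕ) :
    countIn A a L = ∑ i ∈ range L, if a + i ∈ A then 1 else 0 :=
  card_filter _ _

lemma countIn_le (A : Set ℕ) (a L : ℕ) : countIn A a L ≤ L :=
  (card_filter_le _ _).trans_eq (card_range L)

@[simp]
lemma countIn_zero_right (A : Set ℕ) (a : ℕ) : countIn A a 0 = 0 := by
  simp [countIn]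

lemma countIn_add (A : Set ℕ) (a L M : ℕ) :
    countIn A a (L + M) = countIn A a L + countIn A (a + L) M := by
  simp only [countIn_eq_sum, sum_range_add, add_assoc]

lemma countIn_mul (A : Set ℕ) (a M L : ℕ) :
    countIn A a (M * L) = ∑ q ∈ range M, countIn A (a + q * L) L := by
  induction M with
  | zero => simp
  | succ M ih => rw [add_mul, one_mul, countIn_add, ih, sum_range_succ]

lemma countIn_zero_le_one_add (A : Set ℕ) (N : ℕ) : countIn A 0 N ≤ 1 + countIn A 1 N := by
  have h₁ := countIn_add A 0 N 1
  have h₂ := countIn_add A 0 1 N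
  have h₃ := countIn_le A 0 1
  rw [add_comm N 1, zero_add] at h₁
  rw [zero_add] at h₂
  omega

lemma countIn_congr {A B : Set ℕ} {a b L : ℕ} (h : ∀ i < L, (a + i ∈ A ↔ b + i ∈ B)) :
    countIn A a L = countIn B b L :=
  congrArg card (filter_congr fun i hi => h i (mem_range.mp hi))

lemma card_filter_Icc_eq_countIn (A : Set ℕ) (N : ℕ) :
    #{m ∈ Icc 1 N | m ∈ A} = countIn A 1 N := by
  refine card_nbij' (fun m => m - 1) (fun i => 1 + i) ?_ ?_ ?_ ?_ <;> intro x hx <;>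
    simp only [coe_filter, mem_Icc, mem_range, Set.mem_ofPred_eq] at hx ⊢
  · exact ⟨by omega, by rw [Nat.add_sub_cancel' hx.1.1]; exact hx.2⟩
  · exact ⟨by omega, hx.2⟩
  · omega
  · omega

section

variable {A : Set ℕ}

lemma lowerDensity_eq_liminf (A : Set ℕ) :
    lowerDensity A = liminf (fun N : ℕ => (countIn A 1 N : ℝ) / N) atTop := by
  simp only [lowerDensity, card_filter_Icc_eq_countIn]

lemma isBoundedUnder_le_countIn_div (A : Set ℕ) (a : ℕ) :
    IsBoundedUnder (· ≤ ·) atTop fun N : ℕ => (countIn A a N : ℝ) / N :=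
  isBoundedUnder_of
    ⟨1, fun N => div_le_one_of_le₀ (by exact_mod_cast countIn_le A a N) N.cast_nonneg⟩

lemma isBoundedUnder_ge_countIn_div (A : Set ℕ) (a : ℕ) :
    IsBoundedUnder (· ≥ ·) atTop fun N : ℕ => (countIn A a N : ℝ) / N :=
  isBoundedUnder_of ⟨0, fun N => by positivity⟩

lemma exists_pos_eventually_le_countIn (h : 0 < lowerDensity A) :
    ∃ c : ℝ, 0 < c ∧ ∀ᶠ N : ℕ in atTop, c * N ≤ countIn A 1 N := by
  refine ⟨lowerDensity A / 2, half_pos h, ?_⟩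
  rw [lowerDensity_eq_liminf] at h ⊢
  filter_upwards [eventually_lt_of_lt_liminf (half_lt_self h) (isBoundedUnder_ge_countIn_div A 1),
    eventually_gt_atTop 0] with N hN hN0
  exact ((lt_div_iff₀ (by exact_mod_cast hN0)).mp hN).le

lemma lowerDensity_pos_of_eventually_le {c C : ℝ} (hc : 0 < c)
    (h : ∀ᶠ N : ℕ in atTop, c * N ≤ countIn A 1 N + C) : 0 < lowerDensity A := by
  suffices c / 2 ≤ lowerDensity A by linarith
  rw [lowerDensity_eq_liminf]
  refine le_liminf_of_le (isBoundedUnder_le_countIn_div A 1).isCoboundedUnder_ge ?_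
  filter_upwards [h, tendsto_natCast_atTop_atTop.eventually_ge_atTop (2 * C / c),
    eventually_gt_atTop 0] with N hN hNC hN0
  rw [le_div_iff₀ (by exact_mod_cast hN0)]
  rw [div_le_iff₀ hc] at hNC
  linarith

lemma eventually_le_countIn_rich_blocks {c : ℝ} {a K n : ℕ} (hK : 0 < K) (hnK : n ≤ c / 2 * K)
    (h : ∀ᶠ N : ℕ in atTop, c * N ≤ countIn A a N) :
    ∀ᶠ Q : ℕ in atTop, c / 2 * Q ≤ countIn {q | n ≤ countIn A (a + q * K) K} 0 Q := by
  set D := {q | n ≤ countIn A (a + q * K) K}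
  have hQK : Tendsto (· * K) atTop atTop :=
    tendsto_atTop_mono (fun Q => Nat.le_mul_of_pos_right Q hK) tendsto_id
  filter_upwards [hQK.eventually h] with Q hQ
  have hblock : ∀ q, countIn A (a + q * K) K ≤ n + K * if 0 + q ∈ D then 1 else 0 := by
    intro q
    by_cases hq : 0 + q ∈ D
    · rw [if_pos hq, mul_one]
      exact (countIn_le _ _ _).trans (Nat.le_add_left _ _)
    · rw [if_neg hq, mul_zero, add_zero]
      rw [zero_add] at hq
      exact (not_le.mp hq).le
  have hsum : countIn A a (Q * K) ≤ n * Q + K * countIn D 0 Q := by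
    calc countIn A a (Q * K) = ∑ q ∈ range Q, countIn A (a + q * K) K := countIn_mul A a Q K
      _ ≤ ∑ q ∈ range Q, (n + K * if 0 + q ∈ D then 1 else 0) := sum_le_sum fun q _ => hblock q
      _ = n * Q + K * countIn D 0 Q := by
        rw [sum_add_distrib, sum_const, card_range, smul_eq_mul, mul_comm Q, ← mul_sum,
          countIn_eq_sum]
        congr!
  have hsum' : c * (Q * K : ℕ) ≤ n * Q + K * countIn D 0 Q := hQ.trans (by exact_mod_cast hsum)
  have hKpos : (0 : ℝ) < K := by exact_mod_cast hK
  push_cast at hsum'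
  have : (K : ℝ) * (c / 2 * Q) ≤ K * countIn D 0 Q := by nlinarith
  exact le_of_mul_le_mul_left this hKpos

lemma exists_le_countIn_window {c : ℝ} {a : ℕ} (h : ∀ᶠ N : ℕ in atTop, c * N ≤ countIn A a N)
    (L : ℕ) : ∃ b, c * L ≤ countIn A b L := by
  by_contra! hlt
  obtain ⟨N₀, hN₀⟩ := eventually_atTop.mp h
  rcases Nat.eq_zero_or_pos L with rfl | hL
  · exact (hlt 0).not_ge (by simp)
  have hM := hN₀ ((N₀ + 1) * L) (by nlinarith)
  rw [countIn_mul] at hM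
  push_cast at hM
  have hsum : ∑ q ∈ range (N₀ + 1), (countIn A (a + q * L) L : ℝ) < ∑ _q ∈ range (N₀ + 1), c * L :=
    sum_lt_sum_of_nonempty nonempty_range_add_one fun q _ => hlt _
  rw [sum_const, card_range, nsmul_eq_mul] at hsum
  push_cast at hsum
  linarith

end

def occurrences (I : Set ℕ) (F : Finset ℕ) : Set ℕ := {x | ∀ t ∈ F, x + t ∈ I}

lemma exists_mem_occurrences_of_le_countIn {I : Set ℕ} {x K n : ℕ} (h : n ≤ countIn I x K) :
    ∃ F ∈ powersetCard n (range K), x ∈ occurrences I F := by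
  obtain ⟨F, hFsub, hFcard⟩ := exists_subset_card_eq h
  exact ⟨F, mem_powersetCard.mpr ⟨hFsub.trans (filter_subset _ _), hFcard⟩,
    fun t ht => (mem_filter.mp (hFsub ht)).2⟩

section Pigeonhole

variable {ι : Type*} {D : Set ℕ} {s : Finset ι} {E : ι → Set ℕ}

lemma countIn_le_sum_of_subset_biUnion (hD : D ⊆ ⋃ i ∈ s, E i) (b L : ℕ) :
    countIn D b L ≤ ∑ i ∈ s, countIn (E i) b L := by
  calc countIn D b L ≤ #(s.biUnion fun i => {j ∈ range L | b + j ∈ E i}) := by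
        refine card_le_card fun j hj => ?_
        rw [mem_filter] at hj
        obtain ⟨i, hi, hj'⟩ := Set.mem_iUnion₂.mp (hD hj.2)
        exact mem_biUnion.mpr ⟨i, hi, mem_filter.mpr ⟨hj.1, hj'⟩⟩
    _ ≤ ∑ i ∈ s, countIn (E i) b L := card_biUnion_le

lemma exists_infinite_dense_windows_of_subset_biUnion {c : ℝ} (hc : 0 < c)
    (hD : D ⊆ ⋃ i ∈ s, E i) (hwin : ∀ L, ∃ b, c * L ≤ countIn D b L) :
    ∃ i ∈ s, ∃ δ : ℝ, 0 < δ ∧ {L : ℕ | ∃ b, δ * L ≤ countIn (E i) b L}.Infinite := by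
  have hs : s.Nonempty := by
    rw [nonempty_iff_ne_empty]
    rintro rfl
    obtain ⟨b, hb⟩ := hwin 1
    have := countIn_le_sum_of_subset_biUnion hD b 1
    rw [sum_empty, Nat.le_zero] at this
    rw [this] at hb
    norm_num at hb
    linarith
  set δ := c / #s
  have hδ : 0 < δ := div_pos hc (by exact_mod_cast hs.card_pos)
  have hcover : ∀ L, ∃ i ∈ s, ∃ b, δ * L ≤ countIn (E i) b L := by
    intro L
    obtain ⟨b, hb⟩ := hwin L
    have hsum : ∑ _i ∈ s, δ * L ≤ ∑ i ∈ s, (countIn (E i) b L : ℝ) :=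
      calc ∑ _i ∈ s, δ * L = c * L := by
            rw [sum_const, nsmul_eq_mul, ← mul_assoc, mul_div_cancel₀ _ (by positivity)]
        _ ≤ countIn D b L := hb
        _ ≤ ∑ i ∈ s, (countIn (E i) b L : ℝ) := by
            exact_mod_cast countIn_le_sum_of_subset_biUnion hD b L
    obtain ⟨i, hi, hiL⟩ := exists_le_of_sum_le hs hsum
    exact ⟨i, hi, b, hiL⟩
  by_contra! hfin
  refine Set.infinite_univ (α := ℕ) ((s.finite_toSet.biUnion fun i hi => hfin i hi δ hδ).subset
    fun L _ => ?_)
  obtain ⟨i, hi, hL⟩ := hcover L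
  exact Set.mem_biUnion hi hL

end Pigeonhole

lemma exists_prefix_dense_window {E : Set ℕ} {a L : ℕ} {δ : ℝ} (hδ : 0 ≤ δ)
    (hw : δ * L ≤ countIn E a L) :
    ∃ b M : ℕ, δ / 2 * L ≤ M ∧ ∀ x ≤ M, δ / 2 * x ≤ countIn E b x := by
  -- Cut the window where `countIn E a j - δ j / 2` is minimal.
  obtain ⟨j₀, hj₀, hmin⟩ := exists_min_image (range (L + 1))
    (fun j => (countIn E a j : ℝ) - δ / 2 * j) nonempty_range_add_one
  have hj₀L : j₀ ≤ L := Nat.lt_succ_iff.mp (mem_range.mp hj₀)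
  refine ⟨a + j₀, L - j₀, ?_, fun x hx => ?_⟩
  · have h₀ : (countIn E a j₀ : ℝ) - δ / 2 * j₀ ≤ 0 := by simpa using hmin 0 (by simp)
    have hsplit : countIn E a L = countIn E a j₀ + countIn E (a + j₀) (L - j₀) := by
      rw [← countIn_add, Nat.add_sub_cancel' hj₀L]
    have hle : (countIn E (a + j₀) (L - j₀) : ℝ) ≤ (L - j₀ : ℕ) := by
      exact_mod_cast countIn_le E (a + j₀) (L - j₀)
    have hj₀L' : (j₀ : ℝ) ≤ L := by exact_mod_cast hj₀L
    rw [hsplit, Nat.cast_add] at hw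
    rw [Nat.cast_sub hj₀L] at hle ⊢
    nlinarith
  · have h := hmin (j₀ + x) (mem_range.mpr (by omega))
    rw [countIn_add] at h
    push_cast at h
    linarith

lemma exists_frequently_agree {S : Set ℕ} (hS : S.Infinite) (T : ℕ → Set ℕ) :
    ∃ B : Set ℕ, ∀ ℓ : ℕ, ∃ᶠ L in atTop, L ∈ S ∧ ∀ i < ℓ, (i ∈ T L ↔ i ∈ B) := by
  have := cofinite_inf_principal_neBot_iff.mpr hS
  set 𝒰 := Ultrafilter.of (cofinite ⊓ 𝓟 S)
  have h𝒰 : ↑𝒰 ≤ cofinite ⊓ 𝓟 S := Ultrafilter.of_le _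
  refine ⟨{i | ∀ᶠ L in 𝒰, i ∈ T L}, fun ℓ => ?_⟩
  have hagree : ∀ i, ∀ᶠ L in 𝒰, (i ∈ T L ↔ ∀ᶠ L' in 𝒰, i ∈ T L') := by
    intro i
    by_cases hi : ∀ᶠ L' in 𝒰, i ∈ T L'
    · exact hi.mono fun L hL => iff_of_true hL hi
    · exact (Ultrafilter.eventually_not.mpr hi).mono fun L hL => iff_of_false hL hi
  have hS𝒰 : ∀ᶠ L in 𝒰, L ∈ S := h𝒰.trans inf_le_right (mem_principal_self S)
  have h𝒰top : ↑𝒰 ≤ (atTop : Filter ℕ) := h𝒰.trans (inf_le_left.trans Nat.cofinite_eq_atTop.le)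
  refine Frequently.filter_mono (Eventually.frequently ?_) h𝒰top
  exact hS𝒰.and ((eventually_all_finite (Set.finite_Iio ℓ)).mpr fun i _ => hagree i)

def EmbedsFinitely (B E : Set ℕ) : Prop :=
  ∀ J : Finset ℕ, ↑J ⊆ B → ∃ β, ∀ j ∈ J, β + j ∈ E

lemma exists_dense_embedsFinitely {E : Set ℕ} {δ : ℝ} (hδ : 0 < δ)
    (hS : {L : ℕ | ∃ b, δ * L ≤ countIn E b L}.Infinite) :
    ∃ B : Set ℕ, (∀ ℓ : ℕ, δ / 2 * ℓ ≤ countIn B 0 ℓ) ∧ EmbedsFinitely B E := by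
  have hwin : ∀ L ∈ {L : ℕ | ∃ b, δ * L ≤ countIn E b L},
      ∃ b M : ℕ, δ / 2 * L ≤ M ∧ ∀ x ≤ M, δ / 2 * x ≤ countIn E b x :=
    fun L ⟨_, ha⟩ => exists_prefix_dense_window hδ.le ha
  choose! b M hLM hbM using hwin
  obtain ⟨B, hB⟩ := exists_frequently_agree hS fun L => {i | b L + i ∈ E}
  have hgood : ∀ ℓ : ℕ, ∃ L, ℓ ≤ M L ∧ (∀ i < ℓ, (b L + i ∈ E ↔ i ∈ B)) ∧
      ∀ x ≤ M L, δ / 2 * x ≤ countIn E (b L) x := by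
    intro ℓ
    obtain ⟨L, ⟨hLS, hagree⟩, hLℓ⟩ := ((hB ℓ).and_eventually
      (tendsto_natCast_atTop_atTop.eventually_ge_atTop (2 * ℓ / δ))).exists
    refine ⟨L, ?_, hagree, hbM L hLS⟩
    rw [div_le_iff₀ hδ] at hLℓ
    have : (ℓ : ℝ) ≤ M L := by linarith [hLM L hLS]
    exact_mod_cast this
  refine ⟨B, fun ℓ => ?_, fun J hJ => ?_⟩
  · obtain ⟨L, hℓ, hagree, hdense⟩ := hgood ℓ
    rw [countIn_congr (B := E) (b := b L) fun i hi => by rw [zero_add]; exact (hagree i hi).symm]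
    exact hdense ℓ hℓ
  · obtain ⟨L, -, hagree, -⟩ := hgood (J.sup id + 1)
    exact ⟨b L, fun j hj => (hagree j (Nat.lt_succ_of_le (le_sup (f := id) hj))).mpr (hJ hj)⟩

section Scaling

variable {B : Set ℕ} {K : ℕ}

lemma EmbedsFinitely.image_mul {E : Set ℕ} {a : ℕ}
    (h : EmbedsFinitely B ((fun q => a + q * K) ⁻¹' E)) : EmbedsFinitely ((· * K) '' B) E := by
  intro J hJ
  obtain ⟨J₀, hJ₀B, rfl⟩ := subset_set_image_iff.mp hJ
  obtain ⟨β, hβ⟩ := h J₀ hJ₀B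
  refine ⟨a + β * K, fun j hj => ?_⟩
  obtain ⟨q, hq, rfl⟩ := mem_image.mp hj
  have hq' : a + (β + q) * K ∈ E := hβ q hq
  rwa [add_mul, ← add_assoc] at hq'

lemma countIn_le_countIn_image_mul (hK : 0 < K) (N : ℕ) :
    countIn B 0 (N / K) ≤ countIn ((· * K) '' B) 0 N := by
  refine card_le_card_of_injOn (· * K) (fun q hq => ?_) (mul_left_injective₀ hK.ne').injOn
  simp only [coe_filter, mem_range, zero_add, Set.mem_ofPred_eq] at hq ⊢
  have hqK : (q + 1) * K ≤ N := (Nat.le_div_iff_mul_le hK).mp hq.1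
  exact ⟨by rw [add_mul] at hqK; omega, q, hq.2, rfl⟩

lemma lowerDensity_image_mul_pos {δ : ℝ} (hK : 0 < K) (hδ : 0 < δ)
    (h : ∀ ℓ : ℕ, δ * ℓ ≤ countIn B 0 ℓ) : 0 < lowerDensity ((· * K) '' B) := by
  refine lowerDensity_pos_of_eventually_le (c := δ / K) (C := 1 + δ) (by positivity)
    (Eventually.of_forall fun N => ?_)
  have hKpos : (0 : ℝ) < K := by exact_mod_cast hK
  have hN : (N : ℝ) ≤ (N / K + 1 : ℕ) * K := by
    exact_mod_cast (Nat.lt_div_mul_add (a := N) hK).le.trans_eq (by ring)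
  have h₁ : (countIn B 0 (N / K) : ℝ) ≤ countIn ((· * K) '' B) 0 N := by
    exact_mod_cast countIn_le_countIn_image_mul hK N
  have h₂ : (countIn ((· * K) '' B) 0 N : ℝ) ≤ 1 + countIn ((· * K) '' B) 1 N := by
    exact_mod_cast countIn_zero_le_one_add _ N
  calc δ / K * N ≤ δ * (N / K + 1 : ℕ) := by
        rw [div_mul_eq_mul_div, div_le_iff₀ hKpos, mul_assoc]
        exact mul_le_mul_of_nonneg_left hN hδ.le
    _ ≤ countIn ((· * K) '' B) 1 N + (1 + δ) := by
        push_cast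
        linarith [h (N / K)]

end Scaling

lemma injOn_add_mul_of_lt (K : ℕ) :
    Set.InjOn (fun p : ℕ × ℕ => p.1 + p.2) (Set.range (· * K) ×ˢ Set.Iio K) := by
  rintro ⟨_, t⟩ ⟨⟨q, rfl⟩, ht⟩ ⟨_, t'⟩ ⟨⟨q', rfl⟩, ht'⟩ h
  simp only [Set.mem_Iio] at ht ht' h
  have hK : 0 < K := by omega
  have hqt : (q * K + t) / K = q ∧ (q * K + t) % K = t :=
    (Nat.div_mod_unique hK).mpr ⟨by ring, ht⟩
  have hqt' : (q' * K + t') / K = q' ∧ (q' * K + t') % K = t' :=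
    (Nat.div_mod_unique hK).mpr ⟨by ring, ht'⟩
  rw [h] at hqt
  rw [← hqt.1, ← hqt.2, hqt'.1, hqt'.2]

theorem IsIndepSet.of_embedsFinitely {X : Type*} {f : X → X} {𝒜 : Set (Set X)} {I B : Set ℕ}
    {F : Finset ℕ} (hI : IsIndepSet f 𝒜 I) (hB : EmbedsFinitely B (occurrences I F))
    (hinj : Set.InjOn (fun p : ℕ × ℕ => p.1 + p.2) (B ×ˢ ↑F)) :
    IsIndepSet f {S | ∃ Y : ℕ → Set X, (∀ i ∈ F, Y i ∈ 𝒜) ∧ S = ⋂ i ∈ F, f^[i] ⁻¹' Y i} B := by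
  intro J hJ Y hY
  choose! Z hZ𝒜 hYZ using hY
  obtain ⟨β, hβ⟩ := hB J hJ
  set g : ℕ × ℕ → ℕ := fun p => p.1 + p.2
  have hginj : Set.InjOn g ↑(J ×ˢ F) :=
    hinj.mono (by rw [coe_product]; exact Set.prod_mono hJ le_rfl)
  set p : ℕ → ℕ × ℕ := Function.invFunOn g ↑(J ×ˢ F)
  set J' := (J ×ˢ F).image fun q => β + g q
  have hJ'I : ↑J' ⊆ I := by
    intro m hm
    obtain ⟨q, hq, rfl⟩ := mem_image.mp (mem_coe.mp hm)
    rw [mem_product] at hq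
    simpa only [g, add_assoc] using hβ q.1 hq.1 q.2 hq.2
  have hJ'𝒜 : ∀ m ∈ J', Z (p (m - β)).1 (p (m - β)).2 ∈ 𝒜 := by
    intro m hm
    obtain ⟨q, hq, rfl⟩ := mem_image.mp hm
    have hpq := mem_product.mp (Function.invFunOn_mem (f := g) ⟨q, hq, rfl⟩)
    rw [Nat.add_sub_cancel_left]
    exact hZ𝒜 _ hpq.1 _ hpq.2
  obtain ⟨x, hx⟩ := hI J' hJ'I _ hJ'𝒜
  refine ⟨f^[β] x, Set.mem_iInter₂.mpr fun j hj => ?_⟩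
  rw [Set.mem_preimage, hYZ j hj]
  refine Set.mem_iInter₂.mpr fun t ht => ?_
  have hjt : (j, t) ∈ J ×ˢ F := mem_product.mpr ⟨hj, ht⟩
  have hxjt := Set.mem_iInter₂.mp hx (β + g (j, t)) (mem_image_of_mem _ hjt)
  have hp : p (g (j, t)) = (j, t) := hginj.leftInvOn_invFunOn hjt
  rw [Set.mem_preimage, Nat.add_sub_cancel_left, hp] at hxjt
  rw [Set.mem_preimage, ← Function.iterate_add_apply, ← Function.iterate_add_apply]
  convert hxjt using 2
  simp only [g]
  omega

theorem enlarge_indep_sets_general {X : Type*}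
    (f : X → X) (𝒜 : Set (Set X))
    (h : ∃ I : Set ℕ, 0 < lowerDensity I ∧ IsIndepSet f 𝒜 I) (n : ℕ) :
    ∃ F : Finset ℕ, F.card = n ∧
      ∃ B : Set ℕ, 0 < lowerDensity B ∧
        IsIndepSet f
          {S | ∃ Y : ℕ → Set X, (∀ i ∈ F, Y i ∈ 𝒜) ∧ S = ⋂ i ∈ F, f^[i] ⁻¹' Y i}
          B := by
  obtain ⟨I, hIdens, hI⟩ := h
  obtain ⟨c, hc, hcI⟩ := exists_pos_eventually_le_countIn hIdens
  obtain ⟨K, hK, hnK⟩ : ∃ K : ℕ, 0 < K ∧ (n : ℝ) ≤ c / 2 * K := by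
    obtain ⟨K, hK⟩ := exists_nat_ge (2 * n / c)
    refine ⟨K + 1, K.succ_pos, ?_⟩
    rw [div_le_iff₀ hc] at hK
    push_cast
    nlinarith
  have hcover : {q | n ≤ countIn I (1 + q * K) K} ⊆
      ⋃ F ∈ powersetCard n (range K), (fun q => 1 + q * K) ⁻¹' occurrences I F := fun q hq => by
    obtain ⟨F, hF, hqF⟩ := exists_mem_occurrences_of_le_countIn hq
    exact Set.mem_iUnion₂.mpr ⟨F, hF, hqF⟩
  obtain ⟨F, hF, δ, hδ, hwin⟩ := exists_infinite_dense_windows_of_subset_biUnion (half_pos hc)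
    hcover (exists_le_countIn_window (eventually_le_countIn_rich_blocks hK hnK hcI))
  obtain ⟨B, hBdens, hBF⟩ := exists_dense_embedsFinitely hδ hwin
  obtain ⟨hFK, hFcard⟩ := mem_powersetCard.mp hF
  have hinj : Set.InjOn (fun p : ℕ × ℕ => p.1 + p.2) (((· * K) '' B) ×ˢ ↑F) :=
    (injOn_add_mul_of_lt K).mono <|
      Set.prod_mono (Set.image_subset_range _ _) (by simpa [← coe_range] using hFK)
  exact ⟨F, hFcard, (· * K) '' B, lowerDensity_image_mul_pos hK (half_pos hδ) hBdens,
    hI.of_embedsFinitely hBF.image_mul hinj⟩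

/-- If `𝒜` has an independence set of positive density then for each `n` there is
an `n`-element set `F ⊆ ℕ` such that the collection
`𝒜_F = { ⋂_{i∈F} f^{-i}(Y_i) : Y_i ∈ 𝒜 }` also has an independence set of
positive density. -/
theorem enlarge_indep_sets {X : Type*} [MetricSpace X] [CompactSpace X]
    (f : X → X) (hf : Continuous f) (𝒜 : Set (Set X))
    (h : ∃ I : Set ℕ, 0 < lowerDensity I ∧ IsIndepSet f 𝒜 I) (n : ℕ) :
    ∃ F : Finset ℕ, F.card = n ∧
      ∃ B : Set ℕ, 0 < lowerDensity B ∧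
        IsIndepSet f
          {S | ∃ Y : ℕ → Set X, (∀ i ∈ F, Y i ∈ 𝒜) ∧ S = ⋂ i ∈ F, f^[i] ⁻¹' Y i}
          B :=
  enlarge_indep_sets_general f 𝒜 h n
end

section
/- Let X be a compact metric space, f : X → X a homeomorphism, and suppose the tuple (A₁, …, A_k) of subsets of X has an independence set with positive density. If for each i, 𝒜_i is a finite collection of sets with A_i ⊆ ⋃𝒜_i, then there exist A′_i ∈ 𝒜_i for each i such that (A′₁, …, A′_k) has an independence set with positive density. -/
/-!
Split one set `A i₀ ⊆ B ∪ C` at a time. On a finite independence set of size `n`, record which of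
the `2k` sets `B`, `C` and two copies of each other `A i` the orbit of a point visits: at least
`(2k - 1)^n` patterns occur. A weighted Sauer–Shelah–Pajor count (Karpovsky–Milman) then yields
`≥ n / m` coordinates on which every pattern omitting one letter per coordinate occurs; on half of
them `B` is not omitted, or on half of them `C` is not, which gives an independence set of
proportional size for the tuple with `A i₀` replaced by `B` or by `C`. Iterating, each finite piece
`I ∩ [0, n)` contains an independence set of proportional size for some refined tuple. Shifting
each to a point after which all its initial windows are dense (a rising-sun argument) and passing
to an ultrafilter limit gives an independence set of positive lower density for one refined tuple.
-/

open scoped Classical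

/-- `I` is an independence set for the tuple `(A 0, …, A (k-1))` with respect to
`f`: for every finite `J ⊆ I` and every selection `s : ℕ → Fin k`, the
intersection `⋂_{j∈J} f^{-j}(A (s j))` is nonempty. -/
def IsTupleIndepSet {X : Type*} {k : ℕ} (f : X → X) (A : Fin k → Set X)
    (I : Set ℕ) : Prop :=
  ∀ J : Finset ℕ, (J : Set ℕ) ⊆ I → ∀ s : ℕ → Fin k,
    (⋂ j ∈ J, f^[j] ⁻¹' A (s j)).Nonempty

open Finset Function

section Boxes

variable {σ : Type*} [Fintype σ] {n : ℕ}

def ShattersBox (S : Finset (Fin n → σ)) (Γ : Fin n → Finset σ) : Prop :=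
  (∀ i, (Γ i).Nonempty → #(Γ i) + 1 = Fintype.card σ) ∧
    ∀ p : Fin n → σ, (∀ i, (Γ i).Nonempty → p i ∈ Γ i) →
      ∃ x ∈ S, ∀ i, (Γ i).Nonempty → x i = p i

noncomputable def boxWeight (Γ : Fin n → Finset σ) : ℕ :=
  ∏ i, if (Γ i).Nonempty then 1 else Fintype.card σ - 2

noncomputable def shatteredWeight (S : Finset (Fin n → σ)) (Γ : Fin n → Finset σ) : ℕ :=
  if ShattersBox S Γ then boxWeight Γ else 0

noncomputable def consFiber (S : Finset (Fin (n + 1) → σ)) (a : σ) : Finset (Fin n → σ) :=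
  {y | Fin.cons a y ∈ S}

lemma sum_sum_cons {α M : Type*} [Fintype α] [AddCommMonoid M] (g : (Fin (n + 1) → α) → M) :
    ∑ a, ∑ y : Fin n → α, g (Fin.cons a y) = ∑ x, g x := by
  rw [← Fintype.sum_prod_type']
  exact Fintype.sum_equiv (Fin.consEquiv fun _ => α) _ _ fun _ => rfl

lemma card_eq_sum_card_consFiber (S : Finset (Fin (n + 1) → σ)) : #S = ∑ a, #(consFiber S a) := by
  simp only [consFiber, card_filter]
  rw [sum_sum_cons (fun x => if x ∈ S then 1 else 0), sum_boole, filter_univ_mem, Nat.cast_id]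

lemma boxWeight_cons (G : Finset σ) (Γ : Fin n → Finset σ) :
    boxWeight (Fin.cons G Γ : Fin (n + 1) → Finset σ)
      = (if G.Nonempty then 1 else Fintype.card σ - 2) * boxWeight Γ := by
  simp only [boxWeight, Fin.prod_univ_succ, Fin.cons_zero, Fin.cons_succ]

lemma exists_cons_mem_of_shattersBox_consFiber {S : Finset (Fin (n + 1) → σ)} {a : σ}
    {Γ : Fin n → Finset σ} (h : ShattersBox (consFiber S a) Γ) (p : Fin (n + 1) → σ)
    (hp : ∀ i, (Γ i).Nonempty → p i.succ ∈ Γ i) :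
    ∃ x ∈ S, x 0 = a ∧ ∀ i, (Γ i).Nonempty → x i.succ = p i.succ := by
  obtain ⟨y, hy, hyp⟩ := h.2 (Fin.tail p) hp
  exact ⟨Fin.cons a y, by simpa [consFiber] using hy, rfl, by simpa [Fin.tail] using hyp⟩

lemma shattersBox_cons_empty {S : Finset (Fin (n + 1) → σ)} {a : σ} {Γ : Fin n → Finset σ}
    (h : ShattersBox (consFiber S a) Γ) : ShattersBox S (Fin.cons ∅ Γ) := by
  refine ⟨Fin.cases (by simp) fun i => by simpa using h.1 i, fun p hp => ?_⟩
  obtain ⟨x, hx, -, hxp⟩ := exists_cons_mem_of_shattersBox_consFiber h p fun i => by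
    simpa using hp i.succ
  exact ⟨x, hx, Fin.cases (by simp) fun i => by simpa using hxp i⟩

lemma shattersBox_cons {S : Finset (Fin (n + 1) → σ)} {G : Finset σ} {Γ : Fin n → Finset σ}
    (hq : 2 ≤ Fintype.card σ) (hG : #G + 1 = Fintype.card σ)
    (h : ∀ a ∈ G, ShattersBox (consFiber S a) Γ) : ShattersBox S (Fin.cons G Γ) := by
  obtain ⟨a, ha⟩ : G.Nonempty := card_pos.1 (by omega)
  refine ⟨Fin.cases (fun _ => hG) fun i => by simpa using (h a ha).1 i, fun p hp => ?_⟩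
  have hp0 : p 0 ∈ G := by simpa using hp 0 ⟨a, ha⟩
  obtain ⟨x, hx, hx0, hxp⟩ :=
    exists_cons_mem_of_shattersBox_consFiber (h _ hp0) p fun i => by simpa using hp i.succ
  exact ⟨x, hx, Fin.cases (fun _ => hx0) fun i => by simpa using hxp i⟩

lemma le_sub_two_add_choose {q r : ℕ} (hr : r ≤ q) :
    r ≤ (if 0 < r then q - 2 else 0) + r.choose (q - 1) := by
  rcases Nat.eq_zero_or_pos r with rfl | hr0
  · simp
  rw [if_pos hr0]
  rcases (show r ≤ q - 2 ∨ r = q - 1 ∨ r = q by omega) with h | rfl | rfl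
  · omega
  · rw [Nat.choose_self]; omega
  · rw [Nat.choose_symm hr0, Nat.choose_one_right]; omega

lemma sum_shatteredWeight_consFiber_le (hq : 2 ≤ Fintype.card σ) (S : Finset (Fin (n + 1) → σ))
    (Γ : Fin n → Finset σ) :
    ∑ a, shatteredWeight (consFiber S a) Γ ≤ ∑ G, shatteredWeight S (Fin.cons G Γ) := by
  set q := Fintype.card σ
  set R : Finset σ := {a | ShattersBox (consFiber S a) Γ}
  have hempty : (if 0 < #R then q - 2 else 0) * boxWeight Γ
      ≤ shatteredWeight S (Fin.cons ∅ Γ) := by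
    split_ifs with hR
    · obtain ⟨a, ha⟩ := card_pos.1 hR
      rw [shatteredWeight, if_pos (shattersBox_cons_empty (mem_filter.1 ha).2), boxWeight_cons,
        if_neg Finset.not_nonempty_empty]
    · simp
  have hfull : (#R).choose (q - 1) * boxWeight Γ
      = ∑ G ∈ R.powersetCard (q - 1), shatteredWeight S (Fin.cons G Γ) := by
    rw [← card_powersetCard, ← smul_eq_mul, ← sum_const]
    refine sum_congr rfl fun G hG => ?_
    rw [mem_powersetCard] at hG
    rw [shatteredWeight, if_pos (shattersBox_cons hq (by omega)
      fun a ha => (mem_filter.1 (hG.1 ha)).2), boxWeight_cons, if_pos (card_pos.1 (by omega)),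
      one_mul]
  have hnot : ∅ ∉ R.powersetCard (q - 1) := by
    simp only [mem_powersetCard, card_empty]; omega
  calc ∑ a, shatteredWeight (consFiber S a) Γ = #R * boxWeight Γ := by
        simp only [shatteredWeight]; rw [← sum_filter, sum_const, smul_eq_mul]
    _ ≤ ((if 0 < #R then q - 2 else 0) + (#R).choose (q - 1)) * boxWeight Γ :=
        Nat.mul_le_mul_right _ (le_sub_two_add_choose (card_le_univ R))
    _ ≤ ∑ G ∈ insert ∅ (R.powersetCard (q - 1)), shatteredWeight S (Fin.cons G Γ) := by
        rw [add_mul, hfull, sum_insert hnot]; exact Nat.add_le_add_right hempty _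
    _ ≤ ∑ G, shatteredWeight S (Fin.cons G Γ) := sum_le_sum_of_subset (subset_univ _)

theorem card_le_sum_shatteredWeight (hq : 2 ≤ Fintype.card σ) :
    ∀ {n : ℕ} (S : Finset (Fin n → σ)), #S ≤ ∑ Γ, shatteredWeight S Γ
  | 0, S => by
    rcases S.eq_empty_or_nonempty with rfl | ⟨x, hx⟩
    · simp
    rw [Fintype.sum_unique, shatteredWeight, if_pos ⟨finZeroElim, fun _ _ => ⟨x, hx, finZeroElim⟩⟩]
    simpa [boxWeight] using card_le_one_of_subsingleton S
  | n + 1, S =>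
    calc #S = ∑ a, #(consFiber S a) := card_eq_sum_card_consFiber S
      _ ≤ ∑ a, ∑ Γ, shatteredWeight (consFiber S a) Γ :=
          sum_le_sum fun a _ => card_le_sum_shatteredWeight hq (consFiber S a)
      _ = ∑ Γ, ∑ a, shatteredWeight (consFiber S a) Γ := sum_comm
      _ ≤ ∑ Γ, ∑ G, shatteredWeight S (Fin.cons G Γ) :=
          sum_le_sum fun Γ _ => sum_shatteredWeight_consFiber_le hq S Γ
      _ = ∑ G, ∑ Γ, shatteredWeight S (Fin.cons G Γ) := sum_comm
      _ = ∑ Δ, shatteredWeight S Δ := sum_sum_cons _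

end Boxes

section Bound

variable {σ : Type*} [Fintype σ] {n : ℕ}

lemma card_filter_card_add_one_eq (hq : 1 ≤ Fintype.card σ) :
    #{G : Finset σ | #G + 1 = Fintype.card σ} = Fintype.card σ := by
  have : ({G : Finset σ | #G + 1 = Fintype.card σ} : Finset _)
      = powersetCard (Fintype.card σ - 1) univ := by
    ext G; rw [mem_filter, mem_powersetCard_univ]; simp only [mem_univ, true_and]; omega
  rw [this, card_powersetCard, card_univ, Nat.choose_symm hq, Nat.choose_one_right]

-- With `q = card σ`, all boxes together weigh `(q - 2 + q θ)^n`, below `(q - 1)^n` for `θ < 1 / q`,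
-- while a box of support `s` is discounted only by `θ^s`.
noncomputable def letterWeight (θ : ℝ) (G : Finset σ) : ℝ :=
  (if #G + 1 = Fintype.card σ then θ else 0) + if G.Nonempty then 0 else (Fintype.card σ : ℝ) - 2

lemma sum_letterWeight (hq : 1 ≤ Fintype.card σ) (θ : ℝ) :
    ∑ G : Finset σ, letterWeight θ G = Fintype.card σ * θ + (Fintype.card σ - 2) := by
  unfold letterWeight
  rw [sum_add_distrib, sum_ite, sum_const_zero, add_zero, sum_const,
    card_filter_card_add_one_eq hq]
  simp [nonempty_iff_ne_empty, ite_not, sum_ite_eq', nsmul_eq_mul]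

lemma shatteredWeight_le_mul_prod_letterWeight (hq : 2 ≤ Fintype.card σ) {θ : ℝ} (hθ : 0 < θ)
    (hθ₁ : θ ≤ 1) {S : Finset (Fin n → σ)} {t : ℕ}
    (h : ∀ Γ, ShattersBox S Γ → #{i | (Γ i).Nonempty} < t) (Γ : Fin n → Finset σ) :
    (shatteredWeight S Γ : ℝ) ≤ θ⁻¹ ^ t * ∏ i, letterWeight θ (Γ i) := by
  have hq' : (2 : ℝ) ≤ Fintype.card σ := by exact_mod_cast hq
  unfold shatteredWeight
  split_ifs with hΓ
  · have hi : ∀ i, letterWeight θ (Γ i) = (if (Γ i).Nonempty then θ else 1) *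
        ((if (Γ i).Nonempty then 1 else Fintype.card σ - 2 : ℕ) : ℝ) := by
      intro i
      by_cases hN : (Γ i).Nonempty
      · simp [letterWeight, hN, hΓ.1 i hN]
      · have : #(Γ i) + 1 ≠ Fintype.card σ := by
          rw [not_nonempty_iff_eq_empty.1 hN]; simp; omega
        simp [letterWeight, hN, this, Nat.cast_sub hq]
    rw [prod_congr rfl fun i _ => hi i, prod_mul_distrib, prod_ite, prod_const, prod_const_one,
      mul_one, boxWeight, Nat.cast_prod, ← mul_assoc]
    refine le_mul_of_one_le_left (by positivity) ?_
    calc (1 : ℝ) = θ⁻¹ ^ #{i | (Γ i).Nonempty} * θ ^ #{i | (Γ i).Nonempty} := by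
          rw [← mul_pow, inv_mul_cancel₀ hθ.ne', one_pow]
      _ ≤ θ⁻¹ ^ t * θ ^ #{i | (Γ i).Nonempty} := by
          gcongr
          · exact one_le_inv₀ hθ |>.2 hθ₁
          · exact (h Γ hΓ).le
  · push_cast
    exact mul_nonneg (by positivity) (prod_nonneg fun i _ => by
      simp only [letterWeight]; split_ifs <;> linarith)

theorem card_le_of_forall_shattersBox_card_lt (hq : 2 ≤ Fintype.card σ)
    (S : Finset (Fin n → σ)) (t : ℕ)
    (h : ∀ Γ, ShattersBox S Γ → #{i | (Γ i).Nonempty} < t) :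
    (#S : ℝ) ≤ (2 * Fintype.card σ) ^ t * (Fintype.card σ - 3 / 2) ^ n := by
  have hq' : (2 : ℝ) ≤ Fintype.card σ := by exact_mod_cast hq
  calc (#S : ℝ) ≤ ∑ Γ, (shatteredWeight S Γ : ℝ) := by
        exact_mod_cast card_le_sum_shatteredWeight hq S
    _ ≤ ∑ Γ : Fin n → Finset σ, (2 * Fintype.card σ) ^ t *
          ∏ i, letterWeight (2 * Fintype.card σ : ℝ)⁻¹ (Γ i) :=
        sum_le_sum fun Γ _ => by
          simpa only [inv_inv] using shatteredWeight_le_mul_prod_letterWeight hq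
            (θ := (2 * Fintype.card σ : ℝ)⁻¹) (by positivity) (inv_le_one_of_one_le₀ (by linarith))
            h Γ
    _ = (2 * Fintype.card σ) ^ t * (Fintype.card σ - 3 / 2) ^ n := by
        rw [← mul_sum, ← Fintype.prod_sum (fun _ G => letterWeight _ G), prod_const, card_univ,
          Fintype.card_fin, sum_letterWeight (by omega)]
        congr 2
        field_simp
        ring

theorem exists_shattersBox_le_card (hq : 2 ≤ Fintype.card σ) :
    ∃ m : ℕ, 0 < m ∧ ∀ {n : ℕ} (S : Finset (Fin n → σ)) (t : ℕ), 0 < t → m * t ≤ n →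
      (Fintype.card σ - 1) ^ n ≤ #S → ∃ Γ, ShattersBox S Γ ∧ t ≤ #{i | (Γ i).Nonempty} := by
  have hq' : (2 : ℝ) ≤ Fintype.card σ := by exact_mod_cast hq
  set ρ : ℝ := (Fintype.card σ - 3 / 2) / (Fintype.card σ - 1)
  have hρ0 : 0 ≤ ρ := div_nonneg (by linarith) (by linarith)
  have hρ1 : ρ < 1 := (div_lt_one (by linarith)).2 (by linarith)
  have hlim := (tendsto_pow_atTop_nhds_zero_of_lt_one hρ0 hρ1).const_mul (2 * Fintype.card σ : ℝ)
  rw [mul_zero] at hlim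
  obtain ⟨m, hm, hm0⟩ :=
    ((hlim.eventually (gt_mem_nhds one_pos)).and (Filter.eventually_gt_atTop 0)).exists
  refine ⟨m, hm0, fun {n} S t ht hmt hS => ?_⟩
  by_contra! hno
  have hS' : ((Fintype.card σ : ℝ) - 1) ^ n ≤ #S := by
    have := Nat.cast_le (α := ℝ) |>.2 hS
    push_cast [Nat.cast_sub (by omega : 1 ≤ Fintype.card σ)] at this
    exact this
  have hpos : (0 : ℝ) < (Fintype.card σ - 1) ^ n := pow_pos (by linarith) n
  have key := hS'.trans (card_le_of_forall_shattersBox_card_lt hq S t hno)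
  have hsplit : ((Fintype.card σ : ℝ) - 3 / 2) ^ n = ρ ^ n * (Fintype.card σ - 1) ^ n := by
    rw [← mul_pow, div_mul_cancel₀ _ (by linarith)]
  rw [hsplit, ← mul_assoc] at key
  have : (2 * Fintype.card σ : ℝ) ^ t * ρ ^ n < 1 :=
    calc (2 * Fintype.card σ : ℝ) ^ t * ρ ^ n ≤ (2 * Fintype.card σ) ^ t * ρ ^ (m * t) :=
          mul_le_mul_of_nonneg_left (pow_le_pow_of_le_one hρ0 hρ1.le hmt) (by positivity)
      _ = (2 * Fintype.card σ * ρ ^ m) ^ t := by rw [pow_mul, ← mul_pow]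
      _ < 1 := pow_lt_one₀ (by positivity) hm ht.ne'
  nlinarith

end Bound

section TupleIndepOn

variable {ι ι' Y X : Type*} {k : ℕ}

-- `pos l y` is the position of `y` at time `l` (for a map `f`, `pos j = f^[j]`).
def TupleIndepOn (pos : ι → Y → X) (A : Fin k → Set X) (F : Finset ι) : Prop :=
  ∀ s : ι → Fin k, ∃ y, ∀ l ∈ F, pos l y ∈ A (s l)

variable {pos : ι → Y → X} {A B : Fin k → Set X} {F F' : Finset ι}

lemma TupleIndepOn.mono (h : TupleIndepOn pos A F) (hF : F' ⊆ F) : TupleIndepOn pos A F' :=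
  fun s => (h s).imp fun _ hy l hl => hy l (hF hl)

lemma TupleIndepOn.mono_tuple (h : TupleIndepOn pos A F) (hAB : ∀ i, A i ⊆ B i) :
    TupleIndepOn pos B F :=
  fun s => (h s).imp fun _ hy l hl => hAB _ (hy l hl)

lemma TupleIndepOn.image {g : ι' → ι} {W : Finset ι'} (h : TupleIndepOn (fun l => pos (g l)) A W) :
    TupleIndepOn pos A (W.image g) := fun s =>
  (h fun l => s (g l)).imp fun _ hy j hj => by
    obtain ⟨l, hl, rfl⟩ := mem_image.1 hj
    exact hy l hl

end TupleIndepOn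

section Split

variable {Y X : Type*} {k n : ℕ}

lemma mem_or_mem_of_card_add_one_eq {σ : Type*} [Fintype σ] [DecidableEq σ] {G : Finset σ}
    (hG : #G + 1 = Fintype.card σ) {a b : σ} (hab : a ≠ b) : a ∈ G ∨ b ∈ G := by
  by_contra! h
  have hsub : G ⊆ univ \ {a, b} := fun x hx => by
    simp only [mem_sdiff, mem_univ, mem_insert, mem_singleton, true_and]
    rintro (rfl | rfl)
    exacts [h.1 hx, h.2 hx]
  have h₁ := card_le_card hsub
  have h₂ := card_le_univ ({a, b} : Finset σ)
  rw [card_univ_sdiff, card_pair hab] at h₁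
  rw [card_pair hab] at h₂
  omega

-- The sets `A i`, `i ≠ i₀`, occur twice, so that a box omitting one letter per coordinate
-- still offers every `A i`.
def splitTuple (A : Fin k → Set X) (i₀ : Fin k) (B C : Set X) (p : Fin k × Bool) : Set X :=
  update A i₀ (cond p.2 B C) p.1

noncomputable def realizedPatterns {α : Type*} [Fintype α] (pos : Fin n → Y → X)
    (P : α → Set X) : Finset (Fin n → α) :=
  {τ | ∃ y, ∀ l, pos l y ∈ P (τ l)}

lemma pow_le_card_realizedPatterns {pos : Fin n → Y → X} {A : Fin k → Set X} {i₀ : Fin k}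
    {B C : Set X} (hABC : A i₀ ⊆ B ∪ C) (h : TupleIndepOn pos A univ) :
    (Fintype.card (Fin k × Bool) - 1) ^ n ≤ #(realizedPatterns pos (splitTuple A i₀ B C)) := by
  have hcard : #(Fintype.piFinset fun _ : Fin n => univ.erase (i₀, false))
      = (Fintype.card (Fin k × Bool) - 1) ^ n := by
    simp [Fintype.card_piFinset, card_erase_of_mem]
  rw [← hcard]
  -- collapsing the two copies of `i₀` maps the realized patterns onto those avoiding `(i₀, false)`
  refine card_le_card_of_surjOn (fun τ l => if τ l = (i₀, false) then (i₀, true) else τ l)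
    fun g hg => ?_
  replace hg : ∀ l, g l ≠ (i₀, false) := by simpa using hg
  obtain ⟨y, hy⟩ := h fun l => (g l).1
  refine ⟨fun l => if (g l).1 = i₀ then (i₀, decide (pos l y ∈ B)) else g l, ?_, ?_⟩
  · simp only [realizedPatterns, coe_filter, mem_univ, true_and, Set.mem_ofPred_eq]
    refine ⟨y, fun l => ?_⟩
    have hyl := hy l (mem_univ l)
    split_ifs with hl
    · rw [hl] at hyl
      by_cases hB : pos l y ∈ B
      · simp [splitTuple, hB]
      · simpa [splitTuple, hB] using (hABC hyl).resolve_left hB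
    · simpa [splitTuple, update_of_ne hl] using hyl
  · funext l
    by_cases hl : (g l).1 = i₀
    · have hgl : g l = (i₀, true) := by
        cases h2 : (g l).2
        exacts [absurd (Prod.ext hl h2) (hg l), Prod.ext hl h2]
      by_cases hB : pos l y ∈ B <;> simp [hgl, hB]
    · have : g l ≠ (i₀, false) := fun h => hl (by rw [h])
      simp [hl, this]

lemma tupleIndepOn_of_shattersBox {pos : Fin n → Y → X} {A : Fin k → Set X} {i₀ : Fin k}
    {B C : Set X} {Γ : Fin n → Finset (Fin k × Bool)}
    (hΓ : ShattersBox (realizedPatterns pos (splitTuple A i₀ B C)) Γ) (χ : Bool) :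
    TupleIndepOn pos (update A i₀ (cond χ B C)) {l | (i₀, χ) ∈ Γ l} := by
  intro s
  let p : Fin n → Fin k × Bool := fun l => if (s l, χ) ∈ Γ l then (s l, χ) else (s l, !χ)
  have hp : ∀ l, (Γ l).Nonempty → p l ∈ Γ l := fun l hl => by
    rcases mem_or_mem_of_card_add_one_eq (hΓ.1 l hl) (show (s l, χ) ≠ (s l, !χ) by simp)
      with h | h
    · simp [p, h]
    · by_cases h' : (s l, χ) ∈ Γ l <;> simp [p, h, h']
  obtain ⟨x, hx, hxp⟩ := hΓ.2 p hp
  obtain ⟨y, hy⟩ := (mem_filter.1 hx).2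
  refine ⟨y, fun l hl => ?_⟩
  have hl : (i₀, χ) ∈ Γ l := (mem_filter.1 hl).2
  have key : splitTuple A i₀ B C (p l) = update A i₀ (cond χ B C) (s l) := by
    by_cases hsl : s l = i₀
    · simp [p, splitTuple, hsl, hl]
    · simp only [p, splitTuple]
      split_ifs <;> simp [update_of_ne hsl]
  simpa [hxp l ⟨_, hl⟩, key] using hy l

theorem exists_tupleIndepOn_update_fin (i₀ : Fin k) :
    ∃ M : ℕ, ∀ {n : ℕ} (pos : Fin n → Y → X) (A : Fin k → Set X) (B C : Set X),
      A i₀ ⊆ B ∪ C → TupleIndepOn pos A univ →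
        ∃ χ : Bool, ∃ W : Finset (Fin n), n ≤ M * (#W + 1) ∧
          TupleIndepOn pos (update A i₀ (cond χ B C)) W := by
  have hq : 2 ≤ Fintype.card (Fin k × Bool) := by
    simp only [Fintype.card_prod, Fintype.card_fin, Fintype.card_bool]
    have := i₀.pos
    omega
  obtain ⟨m, hm, hm'⟩ := exists_shattersBox_le_card hq
  refine ⟨2 * m, fun {n} pos A B C hABC h => ?_⟩
  rcases lt_or_ge n m with hn | hn
  · obtain ⟨y, -⟩ := h fun _ => i₀
    exact ⟨true, ∅, by simp; omega, fun _ => ⟨y, by simp⟩⟩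
  obtain ⟨Γ, hΓ, hΓt⟩ := hm' _ (n / m) (Nat.div_pos hn hm) (Nat.mul_div_le n m)
    (pow_le_card_realizedPatterns hABC h)
  have hcover : #{l | (Γ l).Nonempty} ≤ #{l | (i₀, true) ∈ Γ l} + #{l | (i₀, false) ∈ Γ l} := by
    refine (card_le_card fun l hl => ?_).trans (card_union_le _ _)
    simpa [mem_union] using mem_or_mem_of_card_add_one_eq (hΓ.1 l (mem_filter.1 hl).2)
      (show (i₀, true) ≠ (i₀, false) by simp)
  obtain ⟨χ, hχ⟩ : ∃ χ : Bool, n / m ≤ 2 * #{l | (i₀, χ) ∈ Γ l} := by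
    by_cases hχ : #{l | (i₀, false) ∈ Γ l} ≤ #{l | (i₀, true) ∈ Γ l}
    exacts [⟨true, by omega⟩, ⟨false, by omega⟩]
  refine ⟨χ, _, ?_, tupleIndepOn_of_shattersBox hΓ χ⟩
  have := Nat.lt_mul_div_succ n hm
  nlinarith

end Split

section Refine

variable {ι Y X : Type*} {k : ℕ} (pos : ι → Y → X)

theorem exists_tupleIndepOn_update (i₀ : Fin k) :
    ∃ M : ℕ, ∀ (A : Fin k → Set X) (B C : Set X), A i₀ ⊆ B ∪ C →
      ∀ F : Finset ι, TupleIndepOn pos A F →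
        ∃ χ : Bool, ∃ F' ⊆ F, #F ≤ M * (#F' + 1) ∧
          TupleIndepOn pos (update A i₀ (cond χ B C)) F' := by
  obtain ⟨M, hM⟩ := exists_tupleIndepOn_update_fin (Y := Y) (X := X) i₀
  refine ⟨M, fun A B C hABC F h => ?_⟩
  let g : Fin #F → ι := fun l => F.equivFin.symm l
  have hF : TupleIndepOn (fun l => pos (g l)) A univ := fun s => by
    obtain ⟨y, hy⟩ := h fun j => if hj : j ∈ F then s (F.equivFin ⟨j, hj⟩) else i₀
    exact ⟨y, fun l _ => by simpa [g] using hy _ (F.equivFin.symm l).2⟩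
  obtain ⟨χ, W, hW, hWind⟩ := hM _ A B C hABC hF
  refine ⟨χ, W.image g, fun j hj => ?_, ?_, hWind.image⟩
  · obtain ⟨l, -, rfl⟩ := mem_image.1 hj
    exact (F.equivFin.symm l).2
  · rwa [card_image_of_injective (f := g) _ (Subtype.val_injective.comp F.equivFin.symm.injective)]

lemma le_mul_add_one_trans {a b c M N : ℕ} (h₁ : a ≤ M * (b + 1)) (h₂ : b ≤ N * (c + 1)) :
    a ≤ M * (N + 1) * (c + 1) := by
  nlinarith

theorem exists_tupleIndepOn_update_mem (i₀ : Fin k) {𝒜 : Finset (Set X)} (h𝒜 : 𝒜.Nonempty) :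
    ∃ M : ℕ, ∀ A : Fin k → Set X, A i₀ ⊆ ⋃₀ ↑𝒜 → ∀ F : Finset ι, TupleIndepOn pos A F →
      ∃ D ∈ 𝒜, ∃ F' ⊆ F, #F ≤ M * (#F' + 1) ∧ TupleIndepOn pos (update A i₀ D) F' := by
  induction h𝒜 using Finset.Nonempty.cons_induction with
  | singleton B =>
    refine ⟨1, fun A hA F h => ⟨B, mem_singleton_self B, F, subset_rfl, by omega,
      h.mono_tuple fun i => ?_⟩⟩
    rcases eq_or_ne i i₀ with rfl | hi
    · simpa using hA
    · simp [update_of_ne hi]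
  | cons B 𝒜 _ _ ih =>
    obtain ⟨M, hM⟩ := ih
    obtain ⟨Ms, hMs⟩ := exists_tupleIndepOn_update pos i₀
    refine ⟨Ms * (M + 1), fun A hA F h => ?_⟩
    obtain ⟨χ, F₁, hF₁, hF₁card, hF₁ind⟩ := hMs A B (⋃₀ ↑𝒜) (by simpa using hA) F h
    cases χ with
    | true =>
      refine ⟨B, mem_cons_self B 𝒜, F₁, hF₁, hF₁card.trans ?_, by simpa using hF₁ind⟩
      nlinarith
    | false =>
      obtain ⟨D, hD, F', hF', hF'card, hF'ind⟩ := hM (update A i₀ (⋃₀ ↑𝒜)) (by simp) F₁ hF₁ind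
      exact ⟨D, mem_cons.2 (Or.inr hD), F', hF'.trans hF₁, le_mul_add_one_trans hF₁card hF'card,
        by simpa using hF'ind⟩

theorem exists_tupleIndepOn_mem {𝒜 : Fin k → Set (Set X)} (hfin : ∀ i, (𝒜 i).Finite)
    (hne : ∀ i, (𝒜 i).Nonempty) :
    ∃ M : ℕ, ∀ A : Fin k → Set X, (∀ i, A i ⊆ ⋃₀ 𝒜 i) → ∀ F : Finset ι, TupleIndepOn pos A F →
      ∃ A' : Fin k → Set X, (∀ i, A' i ∈ 𝒜 i) ∧
        ∃ F' ⊆ F, #F ≤ M * (#F' + 1) ∧ TupleIndepOn pos A' F' := by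
  suffices ∀ T : Finset (Fin k), ∃ M : ℕ, ∀ A : Fin k → Set X, (∀ i, A i ⊆ ⋃₀ 𝒜 i) →
      ∀ F : Finset ι, TupleIndepOn pos A F → ∃ A' : Fin k → Set X, (∀ i, A' i ⊆ ⋃₀ 𝒜 i) ∧
        (∀ i ∈ T, A' i ∈ 𝒜 i) ∧ ∃ F' ⊆ F, #F ≤ M * (#F' + 1) ∧ TupleIndepOn pos A' F' by
    obtain ⟨M, hM⟩ := this univ
    refine ⟨M, fun A hA F h => ?_⟩
    obtain ⟨A', -, hA', hF'⟩ := hM A hA F h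
    exact ⟨A', fun i => hA' i (mem_univ i), hF'⟩
  intro T
  induction T using Finset.induction_on with
  | empty => exact ⟨1, fun A hA F h => ⟨A, hA, by simp, F, subset_rfl, by omega, h⟩⟩
  | insert j T _ ih =>
    obtain ⟨M, hM⟩ := ih
    obtain ⟨Mj, hMj⟩ := exists_tupleIndepOn_update_mem pos j ((hfin j).toFinset_nonempty.2 (hne j))
    refine ⟨M * (Mj + 1), fun A hA F h => ?_⟩
    obtain ⟨A₁, hA₁, hA₁T, F₁, hF₁, hF₁card, hF₁ind⟩ := hM A hA F h
    obtain ⟨D, hD, F', hF', hF'card, hF'ind⟩ := hMj A₁ (by simpa using hA₁ j) F₁ hF₁ind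
    rw [Set.Finite.mem_toFinset] at hD
    refine ⟨update A₁ j D, fun i => ?_, fun i hi => ?_, F', hF'.trans hF₁,
      le_mul_add_one_trans hF₁card hF'card, hF'ind⟩
    · rcases eq_or_ne i j with rfl | hij
      · simpa using Set.subset_sUnion_of_mem hD
      · simpa [update_of_ne hij] using hA₁ i
    · rcases eq_or_ne i j with rfl | hij
      · simpa using hD
      · simpa [update_of_ne hij] using hA₁T i ((mem_insert.1 hi).resolve_left hij)

end Refine

section Dynamics

variable {X : Type*} {k : ℕ} {f : X → X} {A : Fin k → Set X} {I : Set ℕ}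

lemma isTupleIndepSet_iff :
    IsTupleIndepSet f A I ↔ ∀ J : Finset ℕ, ↑J ⊆ I → TupleIndepOn (fun j => f^[j]) A J := by
  simp only [IsTupleIndepSet, TupleIndepOn, Set.Nonempty, Set.mem_iInter₂, Set.mem_preimage]

lemma IsTupleIndepSet.tupleIndepOn (h : IsTupleIndepSet f A I) {F : Finset ℕ} (hF : ↑F ⊆ I) :
    TupleIndepOn (fun j => f^[j]) A F :=
  isTupleIndepSet_iff.1 h F hF

lemma TupleIndepOn.isTupleIndepSet {F : Finset ℕ} (h : TupleIndepOn (fun j => f^[j]) A F) :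
    IsTupleIndepSet f A ↑F :=
  isTupleIndepSet_iff.2 fun _ hJ => h.mono (coe_subset.1 hJ)

lemma IsTupleIndepSet.shift (h : IsTupleIndepSet f A I) (t : ℕ) :
    IsTupleIndepSet f A {j | t + j ∈ I} := by
  rw [isTupleIndepSet_iff] at h ⊢
  intro J hJ s
  obtain ⟨y, hy⟩ := h (J.image (t + ·)) (by simpa [Set.subset_def] using hJ) fun j => s (j - t)
  refine ⟨f^[t] y, fun j hj => ?_⟩
  simpa [← iterate_add_apply, add_comm] using hy (t + j) (mem_image_of_mem _ hj)

lemma IsTupleIndepSet.nonempty (h : IsTupleIndepSet f A I) {j : ℕ} (hj : j ∈ I) (i : Fin k) :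
    (A i).Nonempty := by
  obtain ⟨y, hy⟩ := h.tupleIndepOn (F := {j}) (by simpa) fun _ => i
  exact ⟨_, hy j (mem_singleton_self j)⟩

theorem exists_isTupleIndepSet_of_eventually_count {𝒯 : Set (Fin k → Set X)} (h𝒯 : 𝒯.Finite)
    {A' : ℕ → Fin k → Set X} (hA' : ∀ n, A' n ∈ 𝒯) {V : ℕ → Set ℕ}
    [∀ n, DecidablePred (· ∈ V n)] (hV : ∀ n, IsTupleIndepSet f (A' n) (V n)) {c : ℝ}
    (hc : ∀ m, ∀ᶠ n in Filter.atTop, c * m ≤ Nat.count (· ∈ V n) m) :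
    ∃ A ∈ 𝒯, ∃ I : Set ℕ, (∀ m, c * m ≤ Nat.count (· ∈ I) m) ∧ IsTupleIndepSet f A I := by
  let U := Ultrafilter.of (Filter.atTop : Filter ℕ)
  obtain ⟨A, hA, hAU⟩ : ∃ A ∈ 𝒯, {n | A' n = A} ∈ U :=
    (Ultrafilter.finite_biUnion_mem_iff h𝒯).1
      (Filter.univ_mem' fun n => Set.mem_biUnion (hA' n) rfl)
  let I : Set ℕ := {j | ∀ᶠ n in (U : Filter ℕ), j ∈ V n}
  have hagree : ∀ m, ∀ᶠ n in (U : Filter ℕ), ∀ j ∈ range m, (j ∈ I ↔ j ∈ V n) := fun m =>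
    (Filter.eventually_all_finset _).2 fun j _ => by
      by_cases hj : j ∈ I
      · exact hj.mono fun n hn => iff_of_true hj hn
      · exact (Ultrafilter.eventually_not.2 hj).mono fun n hn => iff_of_false hj hn
  refine ⟨A, hA, I, fun m => ?_, isTupleIndepSet_iff.2 fun J hJ => ?_⟩
  · obtain ⟨n, hn, hcn⟩ := ((hagree m).and (Ultrafilter.of_le _ (hc m))).exists
    rwa [Nat.count_eq_card_filter_range, filter_congr hn, ← Nat.count_eq_card_filter_range]
  · obtain ⟨n, rfl, hJn⟩ :=
      (Filter.Eventually.and hAU ((Filter.eventually_all_finset J).2 fun j hj => hJ hj)).exists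
    exact (hV n).tupleIndepOn hJn

end Dynamics

section Density

lemma count_le_card_filter_Icc_add_one (I : Set ℕ) (n : ℕ) :
    Nat.count (· ∈ I) n ≤ #{m ∈ Icc 1 n | m ∈ I} + 1 := by
  rw [Nat.count_eq_card_filter_range]
  refine (card_le_card fun m hm => ?_).trans (card_insert_le 0 _)
  simp only [mem_filter, mem_range, mem_insert, mem_Icc] at hm ⊢
  rcases Nat.eq_zero_or_pos m with rfl | hm0
  exacts [Or.inl rfl, Or.inr ⟨⟨hm0, hm.1.le⟩, hm.2⟩]

lemma card_filter_Icc_le_count_add_one (I : Set ℕ) (n : ℕ) :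
    #{m ∈ Icc 1 n | m ∈ I} ≤ Nat.count (· ∈ I) n + 1 := by
  rw [Nat.count_eq_card_filter_range]
  refine (card_le_card fun m hm => ?_).trans (card_insert_le n _)
  simp only [mem_filter, mem_range, mem_insert, mem_Icc] at hm ⊢
  rcases hm.1.2.eq_or_lt with rfl | hlt
  exacts [Or.inl rfl, Or.inr ⟨hlt, hm.2⟩]

lemma nonempty_of_lowerDensity_pos {I : Set ℕ} (h : 0 < lowerDensity I) : I.Nonempty := by
  by_contra hI
  rw [Set.not_nonempty_iff_eq_empty] at hI
  simp [lowerDensity, hI] at h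

lemma exists_mul_le_count_of_lowerDensity_pos {I : Set ℕ} (h : 0 < lowerDensity I) :
    ∃ d : ℝ, 0 < d ∧ ∀ᶠ n in Filter.atTop, d * n ≤ Nat.count (· ∈ I) n := by
  refine ⟨lowerDensity I / 4, by positivity, ?_⟩
  have hlt : ∀ᶠ n : ℕ in Filter.atTop,
      lowerDensity I / 2 < (#{m ∈ Icc 1 n | m ∈ I} : ℝ) / n :=
    Filter.eventually_lt_of_lt_liminf (half_lt_self h)
      ⟨0, Filter.eventually_map.2 (Filter.Eventually.of_forall fun n => by positivity)⟩
  filter_upwards [hlt, tendsto_natCast_atTop_atTop.eventually_ge_atTop (4 / lowerDensity I),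
    Filter.eventually_gt_atTop 0] with n hn hn4 hn0
  rw [lt_div_iff₀ (by positivity)] at hn
  rw [div_le_iff₀ h] at hn4
  have : (#{m ∈ Icc 1 n | m ∈ I} : ℝ) ≤ Nat.count (· ∈ I) n + 1 := by
    exact_mod_cast card_filter_Icc_le_count_add_one I n
  nlinarith

lemma lowerDensity_pos_of_mul_le_count {I : Set ℕ} {c : ℝ} (hc : 0 < c)
    (h : ∀ m, c * m ≤ Nat.count (· ∈ I) m) : 0 < lowerDensity I := by
  have hle : c / 2 ≤ lowerDensity I := by
    refine Filter.le_liminf_of_le (Filter.isCoboundedUnder_ge_of_le _ (x := 1) fun n => ?_) ?_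
    · refine div_le_one_of_le₀ ?_ (Nat.cast_nonneg n)
      exact_mod_cast (card_filter_le _ _).trans (by simp)
    · filter_upwards [tendsto_natCast_atTop_atTop.eventually_ge_atTop (2 / c),
        Filter.eventually_gt_atTop 0] with n hn hn0
      rw [le_div_iff₀ (by positivity)]
      rw [div_le_iff₀ hc] at hn
      have : (Nat.count (· ∈ I) n : ℝ) ≤ #{m ∈ Icc 1 n | m ∈ I} + 1 := by
        exact_mod_cast count_le_card_filter_Icc_add_one I n
      nlinarith [h n]
  linarith

lemma exists_le_count_shift (p : ℕ → Prop) [DecidablePred p] {c : ℝ} (hc : 0 ≤ c) (N : ℕ) :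
    ∃ t ≤ N, (Nat.count p N : ℝ) - c * N ≤ (N - t : ℕ) ∧
      ∀ m, t + m ≤ N → c * m ≤ Nat.count (fun j => p (t + j)) m := by
  -- a minimiser of `count p j - c j` over `j ≤ N`: every window to its right has density `≥ c`
  obtain ⟨t, ht, hmin⟩ := (range (N + 1)).exists_min_image
    (fun j => (Nat.count p j : ℝ) - c * j) nonempty_range_add_one
  have htN : t ≤ N := Nat.lt_succ_iff.1 (mem_range.1 ht)
  have hadd : ∀ m, (Nat.count p (t + m) : ℝ) = Nat.count p t + Nat.count (fun j => p (t + j)) m :=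
    fun m => by exact_mod_cast Nat.count_add p t m
  refine ⟨t, htN, ?_, fun m hm => ?_⟩
  · have h0 := hmin 0 (by simp)
    have hN := hadd (N - t)
    rw [Nat.add_sub_cancel' htN] at hN
    have hle : (Nat.count (fun j => p (t + j)) (N - t) : ℝ) ≤ (N - t : ℕ) := by
      exact_mod_cast Nat.count_le _
    have : c * t ≤ c * N := mul_le_mul_of_nonneg_left (by exact_mod_cast htN) hc
    simp only [Nat.count_zero, CharP.cast_eq_zero, mul_zero, sub_zero] at h0
    linarith
  · have := hmin (t + m) (mem_range.2 (by omega))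
    rw [hadd] at this
    push_cast at this
    linarith

lemma exists_shift_eventually_mul_le_count (F : ℕ → Finset ℕ) (hF : ∀ n, F n ⊆ range n) {d : ℝ}
    (hd : 0 < d) (M : ℕ) (h : ∀ᶠ n in Filter.atTop, d * n ≤ M * (#(F n) + 1)) :
    ∃ c : ℝ, 0 < c ∧ ∃ t : ℕ → ℕ,
      ∀ m, ∀ᶠ n in Filter.atTop, c * m ≤ Nat.count (fun j => t n + j ∈ F n) m := by
  set c : ℝ := d / (2 * (M + 1))
  have hc : 0 < c := by positivity
  choose t ht hlen hwin using fun n => exists_le_count_shift (· ∈ F n) hc.le n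
  refine ⟨c, hc, t, fun m => ?_⟩
  filter_upwards [h, (tendsto_natCast_atTop_atTop.const_mul_atTop hc).eventually_ge_atTop
    ((m : ℝ) + 1)] with n hn hnm
  refine hwin n m ?_
  have hlen := hlen n
  rw [Nat.count_eq_card_filter_range, filter_mem_eq_inter, inter_eq_right.2 (hF n)] at hlen
  have hF2 : 2 * (c * n) ≤ #(F n) + 1 := by
    refine le_of_mul_le_mul_right ?_ (by positivity : (0 : ℝ) < M + 1)
    calc 2 * (c * n) * (M + 1) = d * n := by simp only [c]; field_simp
      _ ≤ _ := by nlinarith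
  have : (m : ℝ) ≤ (n - t n : ℕ) := by linarith
  have htn := ht n
  have : m ≤ n - t n := by exact_mod_cast this
  omega

end Density

theorem indep_tuple_refine_general {X : Type*} [MetricSpace X]
    (f : X ≃ₜ X) {k : ℕ} (A : Fin k → Set X)
    (h : ∃ I : Set ℕ, 0 < lowerDensity I ∧ IsTupleIndepSet (f : X → X) A I)
    (𝒜 : Fin k → Set (Set X)) (hfin : ∀ i, (𝒜 i).Finite)
    (hcov : ∀ i, A i ⊆ ⋃₀ 𝒜 i) :
    ∃ A' : Fin k → Set X, (∀ i, A' i ∈ 𝒜 i) ∧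
      ∃ I : Set ℕ, 0 < lowerDensity I ∧ IsTupleIndepSet (f : X → X) A' I := by
  obtain ⟨I, hI, hind⟩ := h
  obtain ⟨d, hd, hdI⟩ := exists_mul_le_count_of_lowerDensity_pos hI
  have hne : ∀ i, (𝒜 i).Nonempty := fun i => by
    obtain ⟨x, hx⟩ := hind.nonempty (nonempty_of_lowerDensity_pos hI).some_mem i
    obtain ⟨B, hB, -⟩ := hcov i hx
    exact ⟨B, hB⟩
  obtain ⟨M, hM⟩ := exists_tupleIndepOn_mem (fun j => (f : X → X)^[j]) hfin hne
  choose A' hA' F' hF' hF'card hF'ind using fun n =>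
    hM A hcov {m ∈ range n | m ∈ I} (hind.tupleIndepOn fun m hm => (mem_filter.1 hm).2)
  obtain ⟨c, hc, t, ht⟩ := exists_shift_eventually_mul_le_count F'
    (fun n => (hF' n).trans (filter_subset _ _)) hd M (hdI.mono fun n hn => hn.trans (by
      rw [Nat.count_eq_card_filter_range]; exact_mod_cast hF'card n))
  obtain ⟨A₀, hA₀, I₀, hI₀, hind₀⟩ := exists_isTupleIndepSet_of_eventually_count
    (Set.Finite.pi hfin) (fun n => Set.mem_univ_pi.2 (hA' n))
    (fun n => (hF'ind n).isTupleIndepSet.shift (t n)) ht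
  exact ⟨A₀, Set.mem_univ_pi.1 hA₀, I₀, lowerDensity_pos_of_mul_le_count hc hI₀, hind₀⟩

/-- If the tuple `(A 1, …, A k)` has an independence set of positive density,
and each `A i` is covered by a finite collection `𝒜 i`, then one may choose
`A' i ∈ 𝒜 i` so that `(A' 1, …, A' k)` has an independence set of positive
density. -/
theorem indep_tuple_refine {X : Type*} [MetricSpace X] [CompactSpace X]
    (f : X ≃ₜ X) {k : ℕ} (A : Fin k → Set X)
    (h : ∃ I : Set ℕ, 0 < lowerDensity I ∧ IsTupleIndepSet (f : X → X) A I)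
    (𝒜 : Fin k → Set (Set X)) (hfin : ∀ i, (𝒜 i).Finite)
    (hcov : ∀ i, A i ⊆ ⋃₀ 𝒜 i) :
    ∃ A' : Fin k → Set X, (∀ i, A' i ∈ 𝒜 i) ∧
      ∃ I : Set ℕ, 0 < lowerDensity I ∧ IsTupleIndepSet (f : X → X) A' I :=
  indep_tuple_refine_general f A h 𝒜 hfin hcov
end

section
/- Let X be a continuum and f : X → X a continuous monotone surjection. If X is hereditarily unicoherent and the inverse limit space lim←(X, f) contains an indecomposable continuum, then X contains an indecomposable continuum. -/
/-!
Pick a coordinate `i` at which two points of the indecomposable continuum `M ⊆ lim←(X, f)`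
differ; its projection `πᵢ(M)` is a nondegenerate subcontinuum of `X`. A decomposition of
`πᵢ(M)` into two proper subcontinua pulls back along `πᵢ` to one of `M`, provided
`M ∩ πᵢ⁻¹(S)` is connected for every subcontinuum `S`. That set is the intersection of `M` with
the cylinder `lim←(X, f) ∩ πᵢ⁻¹(S)`, which is connected as the nested intersection of the
sets of finite chains `xᵢ₊ₙ ↦ … ↦ x₀` with `xᵢ₊ₙ ∈ (fⁿ)⁻¹(S)` and free further coordinates;
these are connected because `X` is and, by monotonicity of `f`, so is `(fⁿ)⁻¹(S)`.
Finally the inverse limit is hereditarily unicoherent: the intersection of two subcontinua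
`H, K` is the nested intersection of the cylinders over `πₙ(H) ∩ πₙ(K)`, which are connected
because `X` is hereditarily unicoherent.
-/

/-- A subcontinuum: a nonempty compact connected subset. -/
def IsSubcontinuum {X : Type*} [TopologicalSpace X] (M : Set X) : Prop :=
  IsCompact M ∧ IsConnected M

/-- An indecomposable continuum: a nondegenerate subcontinuum which is not the
union of two proper subcontinua. -/
def IsIndecomposable {X : Type*} [TopologicalSpace X] (M : Set X) : Prop :=
  IsSubcontinuum M ∧ (∃ a ∈ M, ∃ b ∈ M, a ≠ b) ∧
    ¬∃ H K : Set X, IsSubcontinuum H ∧ IsSubcontinuum K ∧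
      H ⊆ M ∧ K ⊆ M ∧ H ≠ M ∧ K ≠ M ∧ H ∪ K = M

open Set Function Filter Topology

theorem IsPreconnected.iInter_of_directed {Y ι : Type*} [TopologicalSpace Y] [T2Space Y]
    [Nonempty ι] {A : ι → Set Y} (hd : Directed (· ⊇ ·) A) (hAc : ∀ i, IsCompact (A i))
    (hA : ∀ i, IsPreconnected (A i)) : IsPreconnected (⋂ i, A i) := by
  have hC : IsCompact (⋂ i, A i) :=
    (hAc (Classical.arbitrary ι)).of_isClosed_subset (isClosed_iInter fun i => (hAc i).isClosed)
      (iInter_subset _ _)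
  rw [isPreconnected_iff_subset_of_fully_disjoint_closed hC.isClosed]
  intro u v hu hv hCuv huv
  obtain ⟨U, V, hU, hV, hCuU, hCvV, hUV⟩ := SeparatedNhds.of_isCompact_isCompact
    (hC.inter_right hu) (hC.inter_right hv) (huv.mono inter_subset_right inter_subset_right)
  obtain ⟨i, hi⟩ := exists_subset_nhds_of_isCompact hd hAc fun x hx =>
    (hU.union hV).mem_nhds <| (hCuv hx).imp (fun h => hCuU ⟨hx, h⟩) fun h => hCvV ⟨hx, h⟩
  rcases (hA i).subset_or_subset hU hV hUV hi with hiU | hiV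
  · exact Or.inl fun x hx => (hCuv hx).resolve_right fun hxv =>
      disjoint_left.1 hUV (hiU (mem_iInter.1 hx i)) (hCvV ⟨hx, hxv⟩)
  · exact Or.inr fun x hx => (hCuv hx).resolve_left fun hxu =>
      disjoint_left.1 hUV (hCuU ⟨hx, hxu⟩) (hiV (mem_iInter.1 hx i))

theorem isConnected_iterate_preimage {X : Type*} [TopologicalSpace X] [CompactSpace X]
    [T2Space X] {f : X → X} (hc : Continuous f) (hfib : ∀ x, IsConnected (f ⁻¹' {x}))
    {S : Set X} (hSc : IsClosed S) (hS : IsConnected S) : ∀ n, IsConnected (f^[n] ⁻¹' S)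
  | 0 => hS
  | n + 1 => by
    rw [iterate_succ, preimage_comp]
    exact (hc.isClosedMap.isQuotientMap hc fun x => (hfib x).nonempty).isCoinducing
      |>.isConnected_preimage_of_isClosed hfib (hSc.preimage (hc.iterate n))
        (isConnected_iterate_preimage hc hfib hSc hS n)

theorem IsIndecomposable.image {Y Z : Type*} [TopologicalSpace Y] [TopologicalSpace Z]
    [T2Space Z] {M : Set Y} (hM : IsIndecomposable M) {g : Y → Z} (hg : Continuous g)
    (hmono : ∀ S ⊆ g '' M, IsSubcontinuum S → IsPreconnected (M ∩ g ⁻¹' S))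
    (hnd : ∃ a ∈ M, ∃ b ∈ M, g a ≠ g b) : IsIndecomposable (g '' M) := by
  obtain ⟨⟨hMc, hMconn⟩, -, hMind⟩ := hM
  obtain ⟨a, ha, b, hb, hab⟩ := hnd
  refine ⟨⟨hMc.image hg, hMconn.image _ hg.continuousOn⟩,
    ⟨_, mem_image_of_mem g ha, _, mem_image_of_mem g hb, hab⟩, ?_⟩
  rintro ⟨H, K, hH, hK, hHM, hKM, hHne, hKne, hHK⟩
  have pullback : ∀ S ⊆ g '' M, IsSubcontinuum S → IsSubcontinuum (M ∩ g ⁻¹' S) := by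
    intro S hSM hS
    obtain ⟨z, hz⟩ := hS.2.nonempty
    obtain ⟨y, hy, rfl⟩ := hSM hz
    exact ⟨hMc.inter_right (hS.1.isClosed.preimage hg), ⟨y, hy, hz⟩, hmono S hSM hS⟩
  have proper : ∀ S ⊆ g '' M, S ≠ g '' M → M ∩ g ⁻¹' S ≠ M := fun S hSM hSne hS =>
    hSne (hSM.antisymm (image_subset_iff.2 (inter_eq_left.1 hS)))
  refine hMind ⟨_, _, pullback H hHM hH, pullback K hKM hK, inter_subset_left, inter_subset_left,
    proper H hHM hHne, proper K hKM hKne, ?_⟩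
  rw [← inter_union_distrib_left, ← preimage_union, hHK]
  exact inter_eq_left.2 (subset_preimage_image g M)

section InverseLimit

variable {X : Type*}

def invLim (f : X → X) : Set (ℕ → X) := {x | ∀ i, f (x (i + 1)) = x i}

/-- Chains `xₙ ↦ xₙ₋₁ ↦ … ↦ x₀` under `f`, with the coordinates beyond `n` unconstrained. -/
def partialInvLim (f : X → X) (n : ℕ) : Set (ℕ → X) := {x | ∀ i < n, f (x (i + 1)) = x i}

variable {f : X → X}

theorem invLim_subset_partialInvLim (n : ℕ) : invLim f ⊆ partialInvLim f n :=
  fun _ hx i _ => hx i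

theorem partialInvLim_antitone : Antitone (partialInvLim f) :=
  fun _ _ hmn _ hx i hi => hx i (hi.trans_le hmn)

theorem iInter_partialInvLim_add (i : ℕ) : ⋂ n, partialInvLim f (i + n) = invLim f :=
  (subset_iInter fun _ => invLim_subset_partialInvLim _).antisymm'
    fun x hx j => mem_iInter.1 hx (j + 1) j (by omega)

theorem iterate_apply_of_mem_partialInvLim {n j : ℕ} {x : ℕ → X}
    (hx : x ∈ partialInvLim f n) (hj : j ≤ n) : f^[n - j] (x n) = x j := by
  have key : ∀ k, j + k ≤ n → f^[k] (x (j + k)) = x j := by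
    intro k
    induction k with
    | zero => intro _; rfl
    | succ k ih =>
      intro hk
      rw [iterate_succ_apply, ← add_assoc, hx (j + k) (by omega)]
      exact ih (by omega)
  simpa [Nat.add_sub_cancel' hj] using key (n - j) (by omega)

theorem partialInvLim_inter_eval_preimage {i m : ℕ} (hi : i ≤ m) (S : Set X) :
    partialInvLim f m ∩ eval i ⁻¹' S = partialInvLim f m ∩ eval m ⁻¹' (f^[m - i] ⁻¹' S) := by
  ext x
  simp only [mem_inter_iff, mem_preimage, eval]
  exact and_congr_right fun hx => by rw [iterate_apply_of_mem_partialInvLim hx hi]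

theorem partialInvLim_inter_eval_preimage_self (m : ℕ) (T : Set X) :
    partialInvLim f m ∩ eval m ⁻¹' T =
      (fun p : X × (ℕ → X) => fun j => if j ≤ m then f^[m - j] p.1 else p.2 j) ''
        (T ×ˢ univ) := by
  ext x
  constructor
  · rintro ⟨hx, hxT⟩
    refine ⟨(x m, x), ⟨hxT, trivial⟩, funext fun j => ?_⟩
    dsimp only
    split_ifs with hj
    · exact iterate_apply_of_mem_partialInvLim hx hj
    · rfl
  · rintro ⟨⟨t, z⟩, ⟨ht, -⟩, rfl⟩
    refine ⟨fun j hj => ?_, ?_⟩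
    · simp only [show j + 1 ≤ m by omega, show j ≤ m by omega, if_true]
      rw [show m - j = m - (j + 1) + 1 by omega, iterate_succ_apply']
    · simpa using ht

variable [TopologicalSpace X]

theorem isClosed_partialInvLim [T2Space X] (hc : Continuous f) (n : ℕ) :
    IsClosed (partialInvLim f n) := by
  simp only [partialInvLim, ofPred_forall]
  exact isClosed_biInter fun i _ =>
    isClosed_eq (hc.comp (continuous_apply _)) (continuous_apply _)

theorem isClosed_invLim [T2Space X] (hc : Continuous f) : IsClosed (invLim f) := by
  simp only [invLim, ofPred_forall]
  exact isClosed_iInter fun i => isClosed_eq (hc.comp (continuous_apply _)) (continuous_apply _)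

theorem isPreconnected_partialInvLim_inter_eval_preimage [PreconnectedSpace X]
    (hc : Continuous f) {T : Set X} (hT : IsPreconnected T) (m : ℕ) :
    IsPreconnected (partialInvLim f m ∩ eval m ⁻¹' T) := by
  rw [partialInvLim_inter_eval_preimage_self]
  refine (hT.prod isPreconnected_univ).image _ (Continuous.continuousOn ?_)
  refine continuous_pi fun j => ?_
  split_ifs
  · exact (hc.iterate _).comp continuous_fst
  · exact (continuous_apply j).comp continuous_snd

theorem mem_of_forall_eval_mem_image {T : Set (ℕ → X)} (hT : T ⊆ invLim f) (hTc : IsClosed T)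
    {x : ℕ → X} (hx : x ∈ invLim f) (hxT : ∀ n, x n ∈ eval n '' T) : x ∈ T := by
  choose y hyT hyx using hxT
  have hagree : ∀ j n, j ≤ n → y n j = x j := fun j n hjn => by
    rw [← iterate_apply_of_mem_partialInvLim (invLim_subset_partialInvLim n (hT (hyT n))) hjn,
      ← iterate_apply_of_mem_partialInvLim (invLim_subset_partialInvLim n hx) hjn]
    exact congrArg _ (hyx n)
  have htend : Tendsto y atTop (𝓝 x) := tendsto_pi_nhds.2 fun j =>
    tendsto_const_nhds.congr' ((eventually_ge_atTop j).mono fun n hn => (hagree j n hn).symm)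
  exact hTc.mem_of_tendsto htend (Eventually.of_forall hyT)

variable [CompactSpace X] [T2Space X] [PreconnectedSpace X]

theorem isPreconnected_invLim_inter_eval_preimage (hc : Continuous f)
    (hfib : ∀ x, IsConnected (f ⁻¹' {x})) {S : Set X} (hSc : IsClosed S) (hS : IsConnected S)
    (i : ℕ) : IsPreconnected (invLim f ∩ eval i ⁻¹' S) := by
  rw [← iInter_partialInvLim_add i, iInter_inter]
  refine IsPreconnected.iInter_of_directed ?_ (fun n => ((isClosed_partialInvLim hc _).inter
    (hSc.preimage (continuous_apply i))).isCompact) fun n => ?_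
  · exact Antitone.directed_ge fun m n hmn =>
      inter_subset_inter_left _ (partialInvLim_antitone (by omega))
  · rw [partialInvLim_inter_eval_preimage (by omega : i ≤ i + n), add_tsub_cancel_left]
    exact isPreconnected_partialInvLim_inter_eval_preimage hc
      (isConnected_iterate_preimage hc hfib hSc hS n).isPreconnected _

theorem isPreconnected_inter_of_subset_invLim (hc : Continuous f)
    (hfib : ∀ x, IsConnected (f ⁻¹' {x}))
    (hhu : ∀ H K : Set X, IsSubcontinuum H → IsSubcontinuum K → IsPreconnected (H ∩ K))
    {H K : Set (ℕ → X)} (hHL : H ⊆ invLim f) (hKL : K ⊆ invLim f) (hHc : IsClosed H)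
    (hH : IsPreconnected H) (hKc : IsClosed K) (hK : IsPreconnected K) :
    IsPreconnected (H ∩ K) := by
  rcases (H ∩ K).eq_empty_or_nonempty with hHK | ⟨w, hwH, hwK⟩
  · exact hHK ▸ isPreconnected_empty
  have hproj : ∀ {T : Set (ℕ → X)}, IsClosed T → IsPreconnected T → w ∈ T →
      ∀ n, IsSubcontinuum (eval n '' T) := fun hTc hT hwT n =>
    ⟨hTc.isCompact.image (continuous_apply n), ⟨_, mem_image_of_mem _ hwT⟩,
      hT.image _ (continuous_apply n).continuousOn⟩
  have hsucc : ∀ {T : Set (ℕ → X)}, T ⊆ invLim f → ∀ {x} n, x ∈ invLim f →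
      x (n + 1) ∈ eval (n + 1) '' T → x n ∈ eval n '' T := by
    rintro T hT x n hx ⟨y, hyT, hyx⟩
    exact ⟨y, hyT, by rw [← hx n, ← hyx]; exact (hT hyT n).symm⟩
  set C : ℕ → Set X := fun n => eval n '' H ∩ eval n '' K
  have hCc : ∀ n, IsClosed (C n) := fun n =>
    (hproj hHc hH hwH n).1.isClosed.inter (hproj hKc hK hwK n).1.isClosed
  have hHK : H ∩ K = ⋂ n, invLim f ∩ eval n ⁻¹' C n := by
    refine Subset.antisymm (fun x hx => mem_iInter.2 fun n =>
      ⟨hHL hx.1, mem_image_of_mem _ hx.1, mem_image_of_mem _ hx.2⟩) fun x hx => ?_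
    rw [mem_iInter] at hx
    exact ⟨mem_of_forall_eval_mem_image hHL hHc (hx 0).1 fun n => (hx n).2.1,
      mem_of_forall_eval_mem_image hKL hKc (hx 0).1 fun n => (hx n).2.2⟩
  rw [hHK]
  refine IsPreconnected.iInter_of_directed ?_
    (fun n => ((isClosed_invLim hc).inter ((hCc n).preimage (continuous_apply n))).isCompact)
    fun n => isPreconnected_invLim_inter_eval_preimage hc hfib (hCc n)
      ⟨⟨w n, mem_image_of_mem _ hwH, mem_image_of_mem _ hwK⟩,
        hhu _ _ (hproj hHc hH hwH n) (hproj hKc hK hwK n)⟩ n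
  refine Antitone.directed_ge (antitone_nat_of_succ_le fun n => ?_)
  rintro x ⟨hx, hxH, hxK⟩
  exact ⟨hx, hsucc hHL n hx hxH, hsucc hKL n hx hxK⟩

end InverseLimit

/-- If `X` is a hereditarily unicoherent continuum and `f : X → X` is a
continuous monotone surjection whose inverse limit contains an indecomposable
continuum, then `X` contains an indecomposable continuum. -/
theorem indecomposable_of_invLim {X : Type*} [MetricSpace X] [CompactSpace X]
    [ConnectedSpace X] (f : X → X) (hc : Continuous f)
    (hs : Function.Surjective f)
    (hmono : ∀ x : X, IsPreconnected (f ⁻¹' {x}))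
    (hhu : ∀ H K : Set X, IsSubcontinuum H → IsSubcontinuum K →
      IsPreconnected (H ∩ K))
    (hind : ∃ M : Set (ℕ → X),
      M ⊆ {x : ℕ → X | ∀ i, f (x (i + 1)) = x i} ∧ IsIndecomposable M) :
    ∃ M : Set X, IsIndecomposable M := by
  obtain ⟨M, hML, hM⟩ := hind
  have hML : M ⊆ invLim f := hML
  have hfib : ∀ x, IsConnected (f ⁻¹' {x}) := fun x => ⟨hs x, hmono x⟩
  obtain ⟨a, ha, b, hb, hab⟩ := hM.2.1
  obtain ⟨i, hi⟩ := Function.ne_iff.1 hab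
  refine ⟨eval i '' M, hM.image (continuous_apply i) (fun S _ hS => ?_) ⟨a, ha, b, hb, hi⟩⟩
  rw [← inter_eq_left.2 hML, inter_assoc]
  exact isPreconnected_inter_of_subset_invLim hc hfib hhu hML inter_subset_left
    hM.1.1.isClosed hM.1.2.isPreconnected
    ((isClosed_invLim hc).inter (hS.1.isClosed.preimage (continuous_apply i)))
    (isPreconnected_invLim_inter_eval_preimage hc hfib hS.1.isClosed hS.2 i)
end

section
/- If X is a hereditarily unicoherent continuum and f : X → X is a continuous monotone map, then the restriction of f to any subcontinuum of X is also monotone (as a map onto its image). -/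
theorem isSubcontinuum_preimage_singleton {X Y : Type*} [TopologicalSpace X] [CompactSpace X]
    [TopologicalSpace Y] [T1Space Y] {f : X → Y} (hf : Continuous f) {y : Y}
    (hne : (f ⁻¹' {y}).Nonempty) (hconn : IsPreconnected (f ⁻¹' {y})) :
    IsSubcontinuum (f ⁻¹' {y}) :=
  ⟨(isClosed_singleton.preimage hf).isCompact, hne, hconn⟩

theorem restriction_monotone_general {X : Type*} [MetricSpace X] [CompactSpace X]
    (f : X → X) (hc : Continuous f)
    (hmono : ∀ x : X, IsPreconnected (f ⁻¹' {x}))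
    (hhu : ∀ H K : Set X, IsSubcontinuum H → IsSubcontinuum K →
      IsPreconnected (H ∩ K)) :
    ∀ K : Set X, IsSubcontinuum K → ∀ y : X,
      IsPreconnected (K ∩ f ⁻¹' {y}) := by
  intro K hK y
  rcases (f ⁻¹' {y}).eq_empty_or_nonempty with hempty | hne
  · simp only [hempty, Set.inter_empty, isPreconnected_empty]
  · exact hhu K _ hK (isSubcontinuum_preimage_singleton hc hne (hmono y))

/-- If `X` is a hereditarily unicoherent continuum and `f : X → X` is a
continuous monotone map, then the restriction of `f` to any subcontinuum is
monotone: the fibre of the restriction over any point, `K ∩ f⁻¹(y)`, is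
connected whenever nonempty. -/
theorem restriction_monotone {X : Type*} [MetricSpace X] [CompactSpace X]
    [ConnectedSpace X] (f : X → X) (hc : Continuous f)
    (hmono : ∀ x : X, IsPreconnected (f ⁻¹' {x}))
    (hhu : ∀ H K : Set X, IsSubcontinuum H → IsSubcontinuum K →
      IsPreconnected (H ∩ K)) :
    ∀ K : Set X, IsSubcontinuum K → ∀ y : X,
      IsPreconnected (K ∩ f ⁻¹' {y}) :=
  restriction_monotone_general f hc hmono hhu
end

section
/- If X is a hereditarily unicoherent continuum and f : X → X is a continuous surjection, then the inverse limit lim←(X, f) is hereditarily unicoherent. -/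
/-!
Put `C n = π_n H ∩ π_n K`: it is a subcontinuum of `X` by hereditary unicoherence, and
`f (C (n + 1)) ⊆ C n`. A closed subset of the inverse limit contains every thread whose
coordinates are all attained by its points, so `H ∩ K` is the set of threads through the `C n`.
It is therefore the decreasing intersection of the sets `D n` of sequences that are threads up to
`n` ending in `C n`, with every coordinate `i` in `π_i H ∪ π_i K`. Pulling the coordinate `n`
back along `f` makes `D n` a continuous image of a product of continua, so each `D n` is a
continuum, and a decreasing intersection of continua in a Hausdorff space is connected.
-/

open Set Filter Function

theorem IsSubcontinuum.image {X Y : Type*} [TopologicalSpace X] [TopologicalSpace Y]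
    {M : Set X} (hM : IsSubcontinuum M) {g : X → Y} (hg : Continuous g) :
    IsSubcontinuum (g '' M) :=
  ⟨hM.1.image hg, hM.2.image g hg.continuousOn⟩

theorem IsSubcontinuum.union {X : Type*} [TopologicalSpace X] {A B : Set X}
    (hA : IsSubcontinuum A) (hB : IsSubcontinuum B) (hAB : (A ∩ B).Nonempty) :
    IsSubcontinuum (A ∪ B) :=
  ⟨hA.1.union hB.1, hA.2.union hAB hB.2⟩

theorem IsPreconnected.iInter_of_directed_of_isCompact {Y ι : Type*} [TopologicalSpace Y]
    [T2Space Y] [Nonempty ι] {V : ι → Set Y} (hV : Directed (· ⊇ ·) V)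
    (hcpt : ∀ i, IsCompact (V i)) (hconn : ∀ i, IsPreconnected (V i)) :
    IsPreconnected (⋂ i, V i) := by
  have hS : IsCompact (⋂ i, V i) :=
    (hcpt (Classical.arbitrary ι)).of_isClosed_subset
      (isClosed_iInter fun i => (hcpt i).isClosed) (iInter_subset _ _)
  rw [isPreconnected_iff_subset_of_fully_disjoint_closed hS.isClosed]
  intro u v hu hv hcover huv
  obtain ⟨U, W, hU, hW, huU, hvW, hUW⟩ := SeparatedNhds.of_isCompact_isCompact
    (hS.inter_right hu) (hS.inter_right hv) (huv.mono inter_subset_right inter_subset_right)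
  obtain ⟨i, hi⟩ : ∃ i, V i ⊆ U ∪ W := by
    refine exists_subset_nhds_of_isCompact hV hcpt fun x hx => (hU.union hW).mem_nhds ?_
    exact (hcover hx).imp (fun hxu => huU ⟨hx, hxu⟩) (fun hxv => hvW ⟨hx, hxv⟩)
  rcases (hconn i).subset_or_subset hU hW hUW hi with hVU | hVW
  · refine .inl fun x hx => (hcover hx).resolve_right fun hxv => ?_
    exact hUW.ne_of_mem (hVU (iInter_subset V i hx)) (hvW ⟨hx, hxv⟩) rfl
  · refine .inr fun x hx => (hcover hx).resolve_left fun hxu => ?_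
    exact hUW.ne_of_mem (huU ⟨hx, hxu⟩) (hVW (iInter_subset V i hx)) rfl

namespace InverseLimit

variable {X : Type*} (f : X → X)

def invLim : Set (ℕ → X) := {x | ∀ i, f (x (i + 1)) = x i}

def partialThreads (n : ℕ) : Set (ℕ → X) := {x | ∀ i < n, f (x (i + 1)) = x i}

def threadBelow (n : ℕ) (y : ℕ → X) : ℕ → X :=
  fun i => if i ≤ n then f^[n - i] (y n) else y i

variable {f}

theorem invLim_subset_partialThreads (n : ℕ) : invLim f ⊆ partialThreads f n :=
  fun _ hx i _ => hx i

theorem isClosed_partialThreads [TopologicalSpace X] [T2Space X] (hf : Continuous f) (n : ℕ) :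
    IsClosed (partialThreads f n) := by
  simp only [partialThreads, ofPred_forall]
  exact isClosed_iInter fun i => isClosed_iInter fun _ =>
    isClosed_eq (hf.comp (continuous_apply _)) (continuous_apply _)

theorem apply_mem_of_mem_partialThreads {n : ℕ} {x : ℕ → X} (hx : x ∈ partialThreads f n)
    {C : ℕ → Set X} (hC : ∀ i < n, MapsTo f (C (i + 1)) (C i)) (hxn : x n ∈ C n)
    {i : ℕ} (hi : i ≤ n) : x i ∈ C i := by
  induction hi using Nat.decreasingInduction with
  | self => exact hxn
  | of_succ k hk ih => exact hx k hk ▸ hC k hk ih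

theorem apply_eq_of_mem_partialThreads {n : ℕ} {x y : ℕ → X} (hx : x ∈ partialThreads f n)
    (hy : y ∈ partialThreads f n) (hxy : x n = y n) {i : ℕ} (hi : i ≤ n) : x i = y i :=
  apply_mem_of_mem_partialThreads hx (C := fun i => {y i})
    (fun i hi => by simp [MapsTo, hy i hi]) hxy hi

theorem threadBelow_apply_self (n : ℕ) (y : ℕ → X) : threadBelow f n y n = y n := by
  simp [threadBelow]

theorem threadBelow_mem_partialThreads (n : ℕ) (y : ℕ → X) :
    threadBelow f n y ∈ partialThreads f n := by
  intro i hi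
  simp only [threadBelow, if_pos (Nat.succ_le_of_lt hi), if_pos hi.le, ← iterate_succ_apply' f]
  congr 2
  omega

theorem threadBelow_eq_self {n : ℕ} {x : ℕ → X} (hx : x ∈ partialThreads f n) :
    threadBelow f n x = x := by
  funext i
  by_cases hi : i ≤ n
  · exact apply_eq_of_mem_partialThreads (threadBelow_mem_partialThreads n x) hx
      (threadBelow_apply_self n x) hi
  · simp [threadBelow, hi]

theorem continuous_threadBelow [TopologicalSpace X] (hf : Continuous f) (n : ℕ) :
    Continuous (threadBelow f n) := by
  refine continuous_pi fun i => ?_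
  by_cases hi : i ≤ n
  · simp only [threadBelow, if_pos hi]
    exact (hf.iterate (n - i)).comp (continuous_apply n)
  · simpa only [threadBelow, if_neg hi] using continuous_apply i

theorem mem_of_forall_apply_mem_image [TopologicalSpace X] {A : Set (ℕ → X)} (hA : IsClosed A)
    (hAf : A ⊆ invLim f) {x : ℕ → X} (hx : x ∈ invLim f)
    (hxA : ∀ i, x i ∈ (fun a => a i) '' A) : x ∈ A := by
  choose a haA hax using hxA
  -- `a j` agrees with `x` in the coordinates `≤ j`, so `a j → x`.
  refine hA.mem_of_tendsto (tendsto_pi_nhds.2 fun i => ?_) (Eventually.of_forall (f := atTop) haA)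
  refine tendsto_const_nhds.congr' ((eventually_ge_atTop i).mono fun j hij => ?_)
  exact (apply_eq_of_mem_partialThreads (invLim_subset_partialThreads j (hAf (haA j)))
    (invLim_subset_partialThreads j hx) (hax j) hij).symm

section Approximation

variable (f) in
def threadApprox (C M : ℕ → Set X) (n : ℕ) : Set (ℕ → X) :=
  partialThreads f n ∩ (fun x => x n) ⁻¹' C n ∩ univ.pi M

variable {C M : ℕ → Set X}

theorem antitone_threadApprox (hC : ∀ i, MapsTo f (C (i + 1)) (C i)) :
    Antitone (threadApprox f C M) := by
  refine antitone_nat_of_succ_le fun n x ⟨⟨hx, hxn⟩, hxM⟩ =>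
    ⟨⟨fun i hi => hx i (by omega), ?_⟩, hxM⟩
  show x n ∈ C n
  exact hx n n.lt_succ_self ▸ hC n hxn

theorem iInter_threadApprox (hCM : ∀ i, C i ⊆ M i) :
    ⋂ n, threadApprox f C M n = invLim f ∩ univ.pi C := by
  ext x
  simp only [threadApprox, mem_iInter, mem_inter_iff, mem_preimage, mem_univ_pi]
  constructor
  · intro hx
    exact ⟨fun i => (hx (i + 1)).1.1 i i.lt_succ_self, fun i => (hx i).1.2⟩
  · rintro ⟨hx, hxC⟩ n
    exact ⟨⟨invLim_subset_partialThreads n hx, hxC n⟩, fun i => hCM i (hxC i)⟩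

theorem isCompact_threadApprox [TopologicalSpace X] [T2Space X] (hf : Continuous f) {n : ℕ}
    (hCn : IsCompact (C n)) (hM : ∀ i, IsCompact (M i)) : IsCompact (threadApprox f C M n) :=
  (isCompact_univ_pi hM).inter_left
    ((isClosed_partialThreads hf n).inter (hCn.isClosed.preimage (continuous_apply n)))

theorem threadApprox_eq_image {n : ℕ} (hC : ∀ i < n, MapsTo f (C (i + 1)) (C i))
    (hCM : ∀ i, C i ⊆ M i) :
    threadApprox f C M n = threadBelow f n '' univ.pi (update M n (C n)) := by
  apply Subset.antisymm
  · rintro x ⟨⟨hx, hxn⟩, hxM⟩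
    refine ⟨x, fun i _ => ?_, threadBelow_eq_self hx⟩
    rcases eq_or_ne i n with rfl | hin
    · simpa using hxn
    · simpa [hin] using hxM i trivial
  · rintro _ ⟨y, hy, rfl⟩
    have hyn : threadBelow f n y n ∈ C n := by
      simpa [threadBelow_apply_self] using hy n trivial
    refine ⟨⟨threadBelow_mem_partialThreads n y, hyn⟩, fun i _ => ?_⟩
    by_cases hin : i ≤ n
    · exact hCM i (apply_mem_of_mem_partialThreads (threadBelow_mem_partialThreads n y) hC hyn hin)
    · simpa [threadBelow, hin, (show i ≠ n by omega)] using hy i trivial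

theorem isPreconnected_threadApprox [TopologicalSpace X] (hf : Continuous f) {n : ℕ}
    (hC : ∀ i < n, MapsTo f (C (i + 1)) (C i)) (hCM : ∀ i, C i ⊆ M i)
    (hCn : IsPreconnected (C n)) (hM : ∀ i, IsPreconnected (M i)) :
    IsPreconnected (threadApprox f C M n) := by
  rw [threadApprox_eq_image hC hCM]
  refine (isPreconnected_univ_pi fun i => ?_).image _ (continuous_threadBelow hf n).continuousOn
  rcases eq_or_ne i n with rfl | hin
  · simpa using hCn
  · simpa [hin] using hM i

end Approximation

theorem mapsTo_image_apply_succ {A : Set (ℕ → X)} (hA : A ⊆ invLim f) (i : ℕ) :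
    MapsTo f ((fun a => a (i + 1)) '' A) ((fun a => a i) '' A) := by
  rintro _ ⟨a, ha, rfl⟩
  exact ⟨a, ha, (hA ha i).symm⟩

theorem inter_eq_invLim_inter_pi [TopologicalSpace X] {H K : Set (ℕ → X)} (hH : IsClosed H)
    (hK : IsClosed K) (hHf : H ⊆ invLim f) (hKf : K ⊆ invLim f) :
    H ∩ K = invLim f ∩ univ.pi fun i => (fun x => x i) '' H ∩ (fun x => x i) '' K := by
  apply Subset.antisymm
  · rintro x ⟨hxH, hxK⟩
    exact ⟨hHf hxH, fun i _ => ⟨⟨x, hxH, rfl⟩, ⟨x, hxK, rfl⟩⟩⟩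
  · rintro x ⟨hx, hxC⟩
    exact ⟨mem_of_forall_apply_mem_image hH hHf hx fun i => (hxC i trivial).1,
      mem_of_forall_apply_mem_image hK hKf hx fun i => (hxC i trivial).2⟩

end InverseLimit

open InverseLimit

theorem invLim_hereditarily_unicoherent_general {X : Type*} [MetricSpace X]
    (f : X → X) (hc : Continuous f)
    (hhu : ∀ H K : Set X, IsSubcontinuum H → IsSubcontinuum K →
      IsPreconnected (H ∩ K)) :
    ∀ H K : Set (ℕ → X), H ⊆ {x : ℕ → X | ∀ i, f (x (i + 1)) = x i} →
      K ⊆ {x : ℕ → X | ∀ i, f (x (i + 1)) = x i} →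
      IsSubcontinuum H → IsSubcontinuum K → IsPreconnected (H ∩ K) := by
  intro H K hHf hKf hH hK
  rcases (H ∩ K).eq_empty_or_nonempty with hHK | ⟨z, hzH, hzK⟩
  · exact hHK ▸ isPreconnected_empty
  have hHi (i : ℕ) := hH.image (continuous_apply i)
  have hKi (i : ℕ) := hK.image (continuous_apply i)
  set C : ℕ → Set X := fun i => (fun x => x i) '' H ∩ (fun x => x i) '' K
  set M : ℕ → Set X := fun i => (fun x => x i) '' H ∪ (fun x => x i) '' K
  have hCM (i : ℕ) : C i ⊆ M i := inter_subset_left.trans subset_union_left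
  have hC (i : ℕ) : MapsTo f (C (i + 1)) (C i) :=
    (mapsTo_image_apply_succ hHf i).inter_inter (mapsTo_image_apply_succ hKf i)
  have hM (i : ℕ) : IsSubcontinuum (M i) :=
    (hHi i).union (hKi i) ⟨z i, ⟨z, hzH, rfl⟩, ⟨z, hzK, rfl⟩⟩
  rw [inter_eq_invLim_inter_pi hH.1.isClosed hK.1.isClosed hHf hKf, ← iInter_threadApprox hCM]
  refine IsPreconnected.iInter_of_directed_of_isCompact (antitone_threadApprox hC).directed_ge
    (fun n => isCompact_threadApprox hc ((hHi n).1.inter (hKi n).1) fun i => (hM i).1)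
    fun n => isPreconnected_threadApprox hc (fun i _ => hC i) hCM (hhu _ _ (hHi n) (hKi n))
      fun i => (hM i).2.isPreconnected

/-- If `X` is a hereditarily unicoherent continuum and `f : X → X` is a
continuous surjection, then the inverse limit `lim← (X, f) ⊆ X^ℕ` is
hereditarily unicoherent: any two of its subcontinua have connected
intersection. -/
theorem invLim_hereditarily_unicoherent {X : Type*} [MetricSpace X]
    [CompactSpace X] [ConnectedSpace X] (f : X → X) (hc : Continuous f)
    (hs : Function.Surjective f)
    (hhu : ∀ H K : Set X, IsSubcontinuum H → IsSubcontinuum K →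
      IsPreconnected (H ∩ K)) :
    ∀ H K : Set (ℕ → X), H ⊆ {x : ℕ → X | ∀ i, f (x (i + 1)) = x i} →
      K ⊆ {x : ℕ → X | ∀ i, f (x (i + 1)) = x i} →
      IsSubcontinuum H → IsSubcontinuum K → IsPreconnected (H ∩ K) :=
  invLim_hereditarily_unicoherent_general f hc hhu
end

section
/- Let X be a continuum and A and B nonempty disjoint closed subsets of X. Suppose that for every pair of disjoint open sets U ⊇ A, V ⊇ B, the triple (X, A, B) is crooked between U and V, witnessed by closed sets F₀, F₁, F₂. Then every continuum in X irreducible between A and B is indecomposable. [Krasinkiewicz–Minc] -/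
/-- Key lemma: under the crookedness assumption there is no pair of
intersecting subcontinua `H`, `L` with `H` meeting `A` but not `B` and
`L` meeting `B` but not `A`. -/
lemma km_aux {X : Type*} [MetricSpace X] [CompactSpace X] (A B H L : Set X)
    (hA : IsClosed A) (hB : IsClosed B) (hAB : Disjoint A B)
    (hcrooked : ∀ U V : Set X, IsOpen U → IsOpen V → Disjoint U V →
      A ⊆ U → B ⊆ V →
      ∃ F₀ F₁ F₂ : Set X, IsClosed F₀ ∧ IsClosed F₁ ∧ IsClosed F₂ ∧
        F₀ ∪ F₁ ∪ F₂ = Set.univ ∧ F₀ ∩ F₂ = ∅ ∧ A ⊆ F₀ ∧ B ⊆ F₂ ∧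
        F₀ ∩ F₁ ⊆ V ∧ F₁ ∩ F₂ ⊆ U)
    (hH : IsSubcontinuum H) (hL : IsSubcontinuum L)
    (hHA : (H ∩ A).Nonempty) (hHB : H ∩ B = ∅)
    (hLB : (L ∩ B).Nonempty) (hLA : L ∩ A = ∅)
    (hHL : (H ∩ L).Nonempty) : False := by
  have hHcl : IsClosed H := hH.1.isClosed
  have hLcl : IsClosed L := hL.1.isClosed
  -- separate A from L ∪ B by disjoint open sets U ⊇ A, W ⊇ L ∪ B
  have hALB : Disjoint A (L ∪ B) := by
    rw [Set.disjoint_union_right]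
    exact ⟨Set.disjoint_left.mpr fun x hxA hxL =>
      (Set.eq_empty_iff_forall_notMem.mp hLA x) ⟨hxL, hxA⟩, hAB⟩
  obtain ⟨U, W, hUo, hWo, hAU, hLBW, hUW⟩ :=
    SeparatedNhds.of_isCompact_isClosed hA.isCompact (hLcl.union hB) hALB
  -- separate B from H by disjoint open sets V' ⊇ B, _ ⊇ H
  have hBH : Disjoint B H := Set.disjoint_left.mpr fun x hxB hxH =>
    (Set.eq_empty_iff_forall_notMem.mp hHB x) ⟨hxH, hxB⟩
  obtain ⟨V', W', hV'o, _, hBV', hHW', hV'W'⟩ :=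
    SeparatedNhds.of_isCompact_isClosed hB.isCompact hHcl hBH
  set V : Set X := W ∩ V' with hVdef
  have hVo : IsOpen V := hWo.inter hV'o
  have hBV : B ⊆ V := Set.subset_inter (fun x hx => hLBW (Or.inr hx)) hBV'
  have hUV : Disjoint U V := hUW.mono_right Set.inter_subset_left
  -- crookedness between U and V
  obtain ⟨F₀, F₁, F₂, hF₀c, hF₁c, hF₂c, hcover, hF₀F₂, hAF₀, hBF₂, hF₀F₁, hF₁F₂⟩ :=
    hcrooked U V hUo hVo hUV hAU hBV
  have hHV : Disjoint H V :=
    Set.disjoint_left.mpr fun x hxH hxV =>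
      Set.disjoint_right.mp hV'W' (hHW' hxH) hxV.2
  have hLU : Disjoint L U := by
    refine Set.disjoint_left.mpr fun x hxL hxU => ?_
    exact Set.disjoint_left.mp hUW hxU (hLBW (Or.inl hxL))
  have hmem : ∀ x : X, x ∈ F₀ ∪ F₁ ∪ F₂ := fun x => hcover ▸ Set.mem_univ x
  -- H ⊆ F₀
  have hHF₀ : H ⊆ F₀ := by
    intro x hx
    by_contra hxF₀
    -- use preconnectedness of H with opens (F₁ ∪ F₂)ᶜ and F₀ᶜ
    have hsub : H ⊆ (F₁ ∪ F₂)ᶜ ∪ F₀ᶜ := by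
      intro y hy
      by_cases hyF₀ : y ∈ F₀
      · left
        rintro (hyF₁ | hyF₂)
        · exact Set.disjoint_left.mp hHV hy (hF₀F₁ ⟨hyF₀, hyF₁⟩)
        · exact Set.eq_empty_iff_forall_notMem.mp hF₀F₂ y ⟨hyF₀, hyF₂⟩
      · right; exact hyF₀
    obtain ⟨a, haH, haA⟩ := hHA
    have ha : a ∈ H ∩ (F₁ ∪ F₂)ᶜ := by
      refine ⟨haH, ?_⟩
      rintro (haF₁ | haF₂)
      · exact Set.disjoint_left.mp hUV (hAU haA) (hF₀F₁ ⟨hAF₀ haA, haF₁⟩)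
      · exact Set.eq_empty_iff_forall_notMem.mp hF₀F₂ a ⟨hAF₀ haA, haF₂⟩
    have hx' : x ∈ H ∩ F₀ᶜ := ⟨hx, hxF₀⟩
    obtain ⟨z, -, hz⟩ := hH.2.2 ((F₁ ∪ F₂)ᶜ) (F₀ᶜ)
      (isOpen_compl_iff.mpr (hF₁c.union hF₂c)) (isOpen_compl_iff.mpr hF₀c)
      hsub ⟨a, ha⟩ ⟨x, hx'⟩
    rcases hmem z with (hz0 | hz2)
    · rcases hz0 with hz0 | hz1
      · exact hz.2 hz0
      · exact hz.1 (Or.inl hz1)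
    · exact hz.1 (Or.inr hz2)
  -- L ⊆ F₂
  have hLF₂ : L ⊆ F₂ := by
    intro x hx
    by_contra hxF₂
    have hsub : L ⊆ (F₀ ∪ F₁)ᶜ ∪ F₂ᶜ := by
      intro y hy
      by_cases hyF₂ : y ∈ F₂
      · left
        rintro (hyF₀ | hyF₁)
        · exact Set.eq_empty_iff_forall_notMem.mp hF₀F₂ y ⟨hyF₀, hyF₂⟩
        · exact Set.disjoint_left.mp hLU hy (hF₁F₂ ⟨hyF₁, hyF₂⟩)
      · right; exact hyF₂
    obtain ⟨b, hbL, hbB⟩ := hLB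
    have hb : b ∈ L ∩ (F₀ ∪ F₁)ᶜ := by
      refine ⟨hbL, ?_⟩
      rintro (hbF₀ | hbF₁)
      · exact Set.eq_empty_iff_forall_notMem.mp hF₀F₂ b ⟨hbF₀, hBF₂ hbB⟩
      · exact Set.disjoint_left.mp hUV (hF₁F₂ ⟨hbF₁, hBF₂ hbB⟩) (hBV hbB)
    have hx' : x ∈ L ∩ F₂ᶜ := ⟨hx, hxF₂⟩
    obtain ⟨z, -, hz⟩ := hL.2.2 ((F₀ ∪ F₁)ᶜ) (F₂ᶜ)
      (isOpen_compl_iff.mpr (hF₀c.union hF₁c)) (isOpen_compl_iff.mpr hF₂c)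
      hsub ⟨b, hb⟩ ⟨x, hx'⟩
    rcases hmem z with (hz0 | hz2)
    · exact hz.1 hz0
    · exact hz.2 hz2
  obtain ⟨p, hpH, hpL⟩ := hHL
  exact Set.eq_empty_iff_forall_notMem.mp hF₀F₂ p ⟨hHF₀ hpH, hLF₂ hpL⟩

/-- Krasinkiewicz–Minc (crookedness-to-indecomposability direction): if
`(X, A, B)` is crooked between every pair of disjoint open neighbourhoods
`U ⊇ A`, `V ⊇ B`, then every continuum in `X` irreducible between `A` and `B`
is indecomposable. -/
theorem krasinkiewicz_minc {X : Type*} [MetricSpace X] [CompactSpace X]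
    [ConnectedSpace X] (A B : Set X) (hA : IsClosed A) (hB : IsClosed B)
    (hAne : A.Nonempty) (hBne : B.Nonempty) (hAB : Disjoint A B)
    (hcrooked : ∀ U V : Set X, IsOpen U → IsOpen V → Disjoint U V →
      A ⊆ U → B ⊆ V →
      ∃ F₀ F₁ F₂ : Set X, IsClosed F₀ ∧ IsClosed F₁ ∧ IsClosed F₂ ∧
        F₀ ∪ F₁ ∪ F₂ = Set.univ ∧ F₀ ∩ F₂ = ∅ ∧ A ⊆ F₀ ∧ B ⊆ F₂ ∧
        F₀ ∩ F₁ ⊆ V ∧ F₁ ∩ F₂ ⊆ U) :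
    ∀ K : Set X, IsSubcontinuum K → (K ∩ A).Nonempty → (K ∩ B).Nonempty →
      (∀ K' : Set X, K' ⊆ K → IsSubcontinuum K' → (K' ∩ A).Nonempty →
        (K' ∩ B).Nonempty → K' = K) →
      IsIndecomposable K := by
  intro K hK hKA hKB hirr
  obtain ⟨a, haK, haA⟩ := hKA
  obtain ⟨b, hbK, hbB⟩ := hKB
  refine ⟨hK, ⟨a, haK, b, hbK, fun hab => Set.disjoint_left.mp hAB haA (hab ▸ hbB)⟩, ?_⟩
  rintro ⟨H, L, hHsub, hLsub, hHK, hLK, hHne, hLne, hHLK⟩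
  -- the swapped crookedness hypothesis
  have hcrooked' : ∀ U V : Set X, IsOpen U → IsOpen V → Disjoint U V →
      B ⊆ U → A ⊆ V →
      ∃ F₀ F₁ F₂ : Set X, IsClosed F₀ ∧ IsClosed F₁ ∧ IsClosed F₂ ∧
        F₀ ∪ F₁ ∪ F₂ = Set.univ ∧ F₀ ∩ F₂ = ∅ ∧ B ⊆ F₀ ∧ A ⊆ F₂ ∧
        F₀ ∩ F₁ ⊆ V ∧ F₁ ∩ F₂ ⊆ U := by
    intro U V hUo hVo hUV hBU hAV
    obtain ⟨F₀, F₁, F₂, h0, h1, h2, hcov, h02, hA0, hB2, h01, h12⟩ :=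
      hcrooked V U hVo hUo hUV.symm hAV hBU
    refine ⟨F₂, F₁, F₀, h2, h1, h0, ?_, ?_, hB2, hA0, ?_, ?_⟩
    · rw [← hcov]; ext x; simp [or_comm, or_assoc, or_left_comm]
    · rw [← h02]; exact Set.inter_comm _ _
    · rw [Set.inter_comm]; exact h12
    · rw [Set.inter_comm]; exact h01
  -- H ∩ L is nonempty since K is connected
  have hHLne : (H ∩ L).Nonempty := by
    by_contra hempty
    rw [Set.not_nonempty_iff_eq_empty] at hempty
    obtain ⟨h0, hh0⟩ := hHsub.2.1
    obtain ⟨l0, hl0⟩ := hLsub.2.1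
    have hsub : K ⊆ Lᶜ ∪ Hᶜ := by
      intro x hx
      by_cases hxH : x ∈ H
      · left; exact fun hxL => Set.eq_empty_iff_forall_notMem.mp hempty x ⟨hxH, hxL⟩
      · right; exact hxH
    obtain ⟨z, hzK, hz⟩ := hK.2.2 (Lᶜ) (Hᶜ)
      (isOpen_compl_iff.mpr hLsub.1.isClosed) (isOpen_compl_iff.mpr hHsub.1.isClosed)
      hsub
      ⟨h0, hHK hh0, fun hh => Set.eq_empty_iff_forall_notMem.mp hempty h0 ⟨hh0, hh⟩⟩
      ⟨l0, hLK hl0, fun hl => Set.eq_empty_iff_forall_notMem.mp hempty l0 ⟨hl, hl0⟩⟩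
    rcases (hHLK ▸ hzK : z ∈ H ∪ L) with hzH | hzL
    · exact hz.2 hzH
    · exact hz.1 hzL
  -- neither H nor L can meet both A and B
  have hHnb : ¬((H ∩ A).Nonempty ∧ (H ∩ B).Nonempty) := fun ⟨h1, h2⟩ =>
    hHne (hirr H hHK hHsub h1 h2)
  have hLnb : ¬((L ∩ A).Nonempty ∧ (L ∩ B).Nonempty) := fun ⟨h1, h2⟩ =>
    hLne (hirr L hLK hLsub h1 h2)
  rcases (hHLK ▸ haK : a ∈ H ∪ L) with haH | haL
  · -- H meets A
    have hHA : (H ∩ A).Nonempty := ⟨a, haH, haA⟩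
    have hHB : H ∩ B = ∅ := by
      rw [← Set.not_nonempty_iff_eq_empty]; exact fun h => hHnb ⟨hHA, h⟩
    have hbL : b ∈ L := by
      rcases (hHLK ▸ hbK : b ∈ H ∪ L) with hbH | hbL
      · exact (Set.eq_empty_iff_forall_notMem.mp hHB b ⟨hbH, hbB⟩).elim
      · exact hbL
    have hLB : (L ∩ B).Nonempty := ⟨b, hbL, hbB⟩
    have hLA : L ∩ A = ∅ := by
      rw [← Set.not_nonempty_iff_eq_empty]; exact fun h => hLnb ⟨h, hLB⟩
    exact km_aux A B H L hA hB hAB hcrooked hHsub hLsub hHA hHB hLB hLA hHLne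
  · -- L meets A
    have hLA : (L ∩ A).Nonempty := ⟨a, haL, haA⟩
    have hLB : L ∩ B = ∅ := by
      rw [← Set.not_nonempty_iff_eq_empty]; exact fun h => hLnb ⟨hLA, h⟩
    have hbH : b ∈ H := by
      rcases (hHLK ▸ hbK : b ∈ H ∪ L) with hbH | hbL
      · exact hbH
      · exact (Set.eq_empty_iff_forall_notMem.mp hLB b ⟨hbL, hbB⟩).elim
    have hHB : (H ∩ B).Nonempty := ⟨b, hbH, hbB⟩
    have hHA : H ∩ A = ∅ := by
      rw [← Set.not_nonempty_iff_eq_empty]; exact fun h => hHnb ⟨h, hHB⟩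
    exact km_aux B A H L hB hA hAB.symm hcrooked' hHsub hLsub hHB hHA hLA hLB hHLne
end

section
/- Let G be a finite connected graph which is a tree, let 𝒢 be a finite open cover of a continuum X whose nerve is G, and let 𝒞 = {C₁, …, C_n} be a free chain in 𝒢. Then 𝒢 \ 𝒞 is the disjoint union of two subcollections 𝒢_a and 𝒢_b whose nerves are disjoint unions of trees, such that ⋃𝒢_a meets (among links of 𝒞) only C₁, ⋃𝒢_b meets only C_n, and the closures of ⋃𝒢_a and ⋃𝒢_b are disjoint. -/
open scoped Classical

/-- The nerve of a finite collection `𝒢` of subsets of `X`: the simple graph on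
`𝒢` with an edge between distinct members iff they intersect. -/
def nerve {X : Type*} (𝒢 : Finset (Set X)) : SimpleGraph {g : Set X // g ∈ 𝒢} where
  Adj a b := a ≠ b ∧ (a.1 ∩ b.1).Nonempty
  symm := by
    constructor
    intro a b hab
    exact ⟨hab.1.symm, Set.inter_comm a.1 b.1 ▸ hab.2⟩
  loopless := by
    constructor
    intro a h
    exact h.1 rfl

/-!
Since the nerve is a tree, each of its edges is a bridge. Take `𝒢ₐ` to be the components of
the nerve of the off-chain members that meet `C 0`, and `𝒢_b` the others. If such a component
also met a link `C i`, `i ≠ 0`, at a member `b`, then the chain `C 0, …, C i` together with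
that component would join `b` to `C i` without using the bridge between them. A member of
`𝒢_b` meets no inner link either, since by freeness the closure of an inner link meets only its
two neighbours. Finally, a point in both closures lies in some open member of the cover
meeting both `⋃𝒢ₐ` and `⋃𝒢_b`; whether that member is a link or not, this pulls a member of
`𝒢_b` into `𝒢ₐ`.
-/

open SimpleGraph

lemma SimpleGraph.Reachable.map_deleteEdges {V W : Type*} {K : SimpleGraph W}
    {H : SimpleGraph V} (f : K →g H) {u v : V} (hv : v ∉ Set.range f) {x y : W}
    (h : K.Reachable x y) : (H.deleteEdges {s(u, v)}).Reachable (f x) (f y) :=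
  h.map
    { toFun := f
      map_rel' := fun {a b} hab => by
        refine (deleteEdges_adj ..).mpr ⟨f.map_rel hab, fun he => ?_⟩
        rcases Sym2.eq_iff.mp (Set.mem_singleton_iff.mp he) with ⟨-, hb⟩ | ⟨ha, -⟩
        exacts [hv ⟨b, hb⟩, hv ⟨a, ha⟩] }

section Nerve

variable {X : Type*}

def nerveEmbedding {𝒦 𝒢 : Finset (Set X)} (h : 𝒦 ⊆ 𝒢) : nerve 𝒦 ↪g nerve 𝒢 where
  toFun a := ⟨a.1, h a.2⟩
  inj' _ _ hab := Subtype.ext (congrArg Subtype.val hab :)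
  map_rel_iff' := and_congr_left' (not_congr (Subtype.mk_eq_mk.trans Subtype.ext_iff.symm))

lemma nerve_reachable_of_inter_nonempty {𝒢 : Finset (Set X)} {g h : Set X} (hg : g ∈ 𝒢)
    (hh : h ∈ 𝒢) (hgh : (g ∩ h).Nonempty) : (nerve 𝒢).Reachable ⟨g, hg⟩ ⟨h, hh⟩ := by
  by_cases heq : g = h
  · subst heq; rfl
  · exact Adj.reachable ⟨fun he => heq (congrArg Subtype.val he), hgh⟩

lemma nerve_reachable_of_chain {𝒢 : Finset (Set X)} {n : ℕ} {C : ℕ → Set X}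
    (hmem : ∀ i < n, C i ∈ 𝒢) (hlink : ∀ i, i + 1 < n → (C i ∩ C (i + 1)).Nonempty)
    {i : ℕ} (hi : i < n) :
    (nerve 𝒢).Reachable ⟨C 0, hmem 0 (Nat.zero_lt_of_lt hi)⟩ ⟨C i, hmem i hi⟩ := by
  induction i with
  | zero => rfl
  | succ i ih =>
    exact (ih (by omega)).trans
      (nerve_reachable_of_inter_nonempty _ _ (hlink i hi))

/-- Otherwise `b`, `a`, `s`, `t` would be joined without the bridge between `b` and `t`. -/
theorem nerve_not_reachable_of_isAcyclic {𝒦 𝒢 : Finset (Set X)}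
    (hA : (nerve 𝒢).IsAcyclic) (h𝒦 : 𝒦 ⊆ 𝒢) {s t : Set X} (hs : s ∈ 𝒢 \ 𝒦)
    (ht : t ∈ 𝒢 \ 𝒦) (hst : s ≠ t) (hreach : (nerve (𝒢 \ 𝒦)).Reachable ⟨s, hs⟩ ⟨t, ht⟩)
    {a b : Set X} (ha : a ∈ 𝒦) (hb : b ∈ 𝒦) (has : (a ∩ s).Nonempty)
    (hbt : (b ∩ t).Nonempty) : ¬(nerve 𝒦).Reachable ⟨a, ha⟩ ⟨b, hb⟩ := by
  intro hab
  obtain ⟨hs𝒢, hs𝒦⟩ := Finset.mem_sdiff.mp hs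
  obtain ⟨ht𝒢, ht𝒦⟩ := Finset.mem_sdiff.mp ht
  let b' : 𝒢 := ⟨b, h𝒦 hb⟩
  let t' : 𝒢 := ⟨t, ht𝒢⟩
  let s' : 𝒢 := ⟨s, hs𝒢⟩
  let D := (nerve 𝒢).deleteEdges {s(b', t')}
  have hbridge : ¬D.Reachable b' t' :=
    isBridge_iff.mp <| isAcyclic_iff_forall_adj_isBridge.mp hA
      ⟨fun he => hb.ne_of_notMem ht𝒦 (congrArg Subtype.val he), hbt⟩
  have hba : D.Reachable b' ⟨a, h𝒦 ha⟩ :=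
    (hab.map_deleteEdges (nerveEmbedding h𝒦).toHom
      fun ⟨c, hc⟩ => c.2.ne_of_notMem ht𝒦 (congrArg Subtype.val hc)).symm
  have has' : D.Adj ⟨a, h𝒦 ha⟩ s' := by
    refine (deleteEdges_adj ..).mpr
      ⟨⟨fun he => ha.ne_of_notMem hs𝒦 (congrArg Subtype.val he), has⟩, fun he => ?_⟩
    rcases Sym2.eq_iff.mp (Set.mem_singleton_iff.mp he) with ⟨-, h⟩ | ⟨-, h⟩
    exacts [hst (congrArg Subtype.val h), hb.ne_of_notMem hs𝒦 (congrArg Subtype.val h).symm]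
  have hst' : D.Reachable s' t' := by
    rw [show D = (nerve 𝒢).deleteEdges {s(t', b')} by rw [Sym2.eq_swap]]
    exact hreach.map_deleteEdges (nerveEmbedding Finset.sdiff_subset).toHom
      fun ⟨c, hc⟩ => c.2.ne_of_notMem (fun h => (Finset.mem_sdiff.mp h).2 hb)
        (congrArg Subtype.val hc)
  exact hbridge (hba.trans (has'.reachable.trans hst'))

noncomputable def componentsMeeting (𝒢 : Finset (Set X)) (A : Set X) : Finset (Set X) :=
  𝒢.filter fun g => ∃ (hg : g ∈ 𝒢) (a : 𝒢), (a.1 ∩ A).Nonempty ∧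
    (nerve 𝒢).Reachable ⟨g, hg⟩ a

variable {𝒢 : Finset (Set X)} {A g h : Set X}

lemma mem_componentsMeeting : g ∈ componentsMeeting 𝒢 A ↔
    ∃ (hg : g ∈ 𝒢) (a : 𝒢), (a.1 ∩ A).Nonempty ∧ (nerve 𝒢).Reachable ⟨g, hg⟩ a := by
  rw [componentsMeeting, Finset.mem_filter, and_iff_right_of_imp Exists.fst]

lemma componentsMeeting_subset : componentsMeeting 𝒢 A ⊆ 𝒢 :=
  Finset.filter_subset _ _

lemma mem_componentsMeeting_of_inter_nonempty (hg : g ∈ 𝒢) (hgA : (g ∩ A).Nonempty) :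
    g ∈ componentsMeeting 𝒢 A :=
  mem_componentsMeeting.mpr ⟨hg, ⟨g, hg⟩, hgA, .refl _⟩

lemma mem_componentsMeeting_of_inter_nonempty_of_mem (hg : g ∈ 𝒢)
    (hh : h ∈ componentsMeeting 𝒢 A) (hgh : (g ∩ h).Nonempty) :
    g ∈ componentsMeeting 𝒢 A := by
  obtain ⟨hh𝒢, a, haA, hha⟩ := mem_componentsMeeting.mp hh
  exact mem_componentsMeeting.mpr
    ⟨hg, a, haA, (nerve_reachable_of_inter_nonempty hg hh𝒢 hgh).trans hha⟩

end Nerve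

theorem disjoint_closure_of_forall_mem_cover {X : Type*} [TopologicalSpace X]
    {𝒰 : Set (Set X)} (hopen : ∀ g ∈ 𝒰, IsOpen g) (hcover : ⋃₀ 𝒰 = Set.univ) {U V : Set X}
    (h : ∀ g ∈ 𝒰, (g ∩ U).Nonempty → ¬(g ∩ V).Nonempty) :
    Disjoint (closure U) (closure V) := by
  refine Set.disjoint_left.mpr fun x hxU hxV => ?_
  obtain ⟨g, hg, hxg⟩ : x ∈ ⋃₀ 𝒰 := hcover ▸ trivial
  exact h g hg (mem_closure_iff.mp hxU g (hopen g hg) hxg)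
    (mem_closure_iff.mp hxV g (hopen g hg) hxg)

section FreeChain

variable {X : Type*} {𝒢 : Finset (Set X)} {n : ℕ} {C : ℕ → Set X}

noncomputable def offChain (𝒢 : Finset (Set X)) (n : ℕ) (C : ℕ → Set X) : Finset (Set X) :=
  𝒢.filter fun g => ∀ i < n, g ≠ C i

lemma offChain_subset : offChain 𝒢 n C ⊆ 𝒢 :=
  Finset.filter_subset _ _

lemma mem_sdiff_offChain (hmem : ∀ i < n, C i ∈ 𝒢) {i : ℕ} (hi : i < n) :
    C i ∈ 𝒢 \ offChain 𝒢 n C :=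
  Finset.mem_sdiff.mpr ⟨hmem i hi, fun h => (Finset.mem_filter.mp h).2 i hi rfl⟩

lemma eq_zero_or_eq_sub_one_of_inter_nonempty [TopologicalSpace X]
    (hfree : ∀ i, 0 < i → i + 1 < n → ∀ g ∈ 𝒢, g ≠ C i →
      (closure g ∩ closure (C i)).Nonempty → g = C (i - 1) ∨ g = C (i + 1))
    {g : Set X} (hg : g ∈ offChain 𝒢 n C) {i : ℕ} (hi : i < n) (hgi : (g ∩ C i).Nonempty) :
    i = 0 ∨ i = n - 1 := by
  obtain ⟨hg𝒢, hoff⟩ := Finset.mem_filter.mp hg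
  by_contra! hinner
  rcases hfree i (by omega) (by omega) g hg𝒢 (hoff i hi)
      (hgi.mono (Set.inter_subset_inter subset_closure subset_closure)) with h | h
  exacts [hoff (i - 1) (by omega) h, hoff (i + 1) (by omega) h]

lemma eq_zero_of_mem_componentsMeeting (hA : (nerve 𝒢).IsAcyclic)
    (hmem : ∀ i < n, C i ∈ 𝒢) (hinj : ∀ i j, i < n → j < n → C i = C j → i = j)
    (hlink : ∀ i, i + 1 < n → (C i ∩ C (i + 1)).Nonempty)
    {g : Set X} (hg : g ∈ componentsMeeting (offChain 𝒢 n C) (C 0)) {i : ℕ} (hi : i < n)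
    (hgi : (g ∩ C i).Nonempty) : i = 0 := by
  obtain ⟨hg', a, ha0, hga⟩ := mem_componentsMeeting.mp hg
  by_contra h0
  exact nerve_not_reachable_of_isAcyclic hA offChain_subset
    (mem_sdiff_offChain hmem (Nat.zero_lt_of_lt hi)) (mem_sdiff_offChain hmem hi)
    (fun h => h0 (hinj 0 i (Nat.zero_lt_of_lt hi) hi h).symm)
    (nerve_reachable_of_chain (fun _ => mem_sdiff_offChain hmem) hlink hi)
    a.2 hg' ha0 hgi hga.symm

end FreeChain

theorem tree_cover_splits_off_free_chain_general {X : Type*} [MetricSpace X]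
    {V : Type*} (G : SimpleGraph V) (hG : G.IsTree)
    (𝒢 : Finset (Set X))
    (hopen : ∀ g ∈ 𝒢, IsOpen g) (hcover : ⋃₀ (𝒢 : Set (Set X)) = Set.univ)
    (hnerve : Nonempty (nerve 𝒢 ≃g G))
    -- the free chain `C 0, …, C (n-1)` in `𝒢`
    (n : ℕ) (C : ℕ → Set X)
    (hmem : ∀ i < n, C i ∈ 𝒢)
    (hinj : ∀ i j, i < n → j < n → C i = C j → i = j)
    (hlink : ∀ i, i + 1 < n → (C i ∩ C (i + 1)).Nonempty)
    (hfree : ∀ i, 0 < i → i + 1 < n → ∀ g ∈ 𝒢, g ≠ C i →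
      (closure g ∩ closure (C i)).Nonempty → g = C (i - 1) ∨ g = C (i + 1)) :
    ∃ Ga Gb : Finset (Set X),
      Disjoint Ga Gb ∧
      Ga ∪ Gb = 𝒢.filter (fun g => ∀ i < n, g ≠ C i) ∧
      (nerve Ga).IsAcyclic ∧ (nerve Gb).IsAcyclic ∧
      (∀ g ∈ Ga, ∀ i < n, (g ∩ C i).Nonempty → i = 0) ∧
      (∀ g ∈ Gb, ∀ i < n, (g ∩ C i).Nonempty → i = n - 1) ∧
      Disjoint (closure (⋃₀ (Ga : Set (Set X))))
        (closure (⋃₀ (Gb : Set (Set X)))) := by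
  have hA : (nerve 𝒢).IsAcyclic := hG.isAcyclic.embedding hnerve.some.toEmbedding
  set Ga := componentsMeeting (offChain 𝒢 n C) (C 0)
  have hGa : ∀ g ∈ Ga, ∀ i < n, (g ∩ C i).Nonempty → i = 0 := fun g hg i hi =>
    eq_zero_of_mem_componentsMeeting hA hmem hinj hlink hg hi
  have hGb : ∀ g ∈ offChain 𝒢 n C \ Ga, ∀ i < n, (g ∩ C i).Nonempty → i = n - 1 := by
    intro g hg i hi hgi
    obtain ⟨hg', hgGa⟩ := Finset.mem_sdiff.mp hg
    refine (eq_zero_or_eq_sub_one_of_inter_nonempty hfree hg' hi hgi).resolve_left ?_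
    rintro rfl
    exact hgGa (mem_componentsMeeting_of_inter_nonempty hg' hgi)
  refine ⟨Ga, offChain 𝒢 n C \ Ga, Finset.disjoint_sdiff,
    Finset.union_sdiff_of_subset componentsMeeting_subset,
    hA.embedding (nerveEmbedding (componentsMeeting_subset.trans offChain_subset)),
    hA.embedding (nerveEmbedding (Finset.sdiff_subset.trans offChain_subset)), hGa, hGb,
    disjoint_closure_of_forall_mem_cover hopen hcover fun g hg hga hgb => ?_⟩
  obtain ⟨x, hxg, a, ha, hxa⟩ := hga
  obtain ⟨y, hyg, b, hb, hyb⟩ := hgb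
  obtain ⟨hb', hbGa⟩ := Finset.mem_sdiff.mp hb
  refine hbGa ?_
  by_cases hgoff : g ∈ offChain 𝒢 n C
  · have hgGa : g ∈ Ga :=
      mem_componentsMeeting_of_inter_nonempty_of_mem hgoff ha ⟨x, hxg, hxa⟩
    exact mem_componentsMeeting_of_inter_nonempty_of_mem hb' hgGa ⟨y, hyb, hyg⟩
  · obtain ⟨i, hi, rfl⟩ : ∃ i < n, g = C i := by
      simpa [offChain, Finset.mem_coe.mp hg] using hgoff
    obtain rfl := hGa a ha i hi ⟨x, hxa, hxg⟩
    exact mem_componentsMeeting_of_inter_nonempty hb' ⟨y, hyb, hyg⟩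

/-- If `𝒢` is a finite open cover of a continuum `X` whose nerve is a tree `G`,
and `𝒞 = {C 0, …, C (n-1)}` is a free chain in `𝒢`, then `𝒢 \ 𝒞` splits into
two disjoint subcollections `𝒢ₐ` and `𝒢_b` whose nerves are forests (disjoint
unions of trees), such that members of `𝒢ₐ` meet, among the links of `𝒞`, only
`C 0`, members of `𝒢_b` meet only `C (n-1)`, and the closures of `⋃𝒢ₐ` and
`⋃𝒢_b` are disjoint. -/
theorem tree_cover_splits_off_free_chain {X : Type*} [MetricSpace X]
    [CompactSpace X] [ConnectedSpace X]
    {V : Type*} [Fintype V] (G : SimpleGraph V) (hG : G.IsTree)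
    (𝒢 : Finset (Set X))
    (hopen : ∀ g ∈ 𝒢, IsOpen g) (hcover : ⋃₀ (𝒢 : Set (Set X)) = Set.univ)
    (hnerve : Nonempty (nerve 𝒢 ≃g G))
    -- the free chain `C 0, …, C (n-1)` in `𝒢`
    (n : ℕ) (hn : 1 ≤ n) (C : ℕ → Set X)
    (hmem : ∀ i < n, C i ∈ 𝒢)
    (hinj : ∀ i j, i < n → j < n → C i = C j → i = j)
    (hlink : ∀ i, i + 1 < n → (C i ∩ C (i + 1)).Nonempty)
    (hchain : ∀ i j, i < n → j < n →
      (closure (C i) ∩ closure (C j)).Nonempty → i ≤ j + 1 ∧ j ≤ i + 1)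
    (hfree : ∀ i, 0 < i → i + 1 < n → ∀ g ∈ 𝒢, g ≠ C i →
      (closure g ∩ closure (C i)).Nonempty → g = C (i - 1) ∨ g = C (i + 1)) :
    ∃ Ga Gb : Finset (Set X),
      Disjoint Ga Gb ∧
      Ga ∪ Gb = 𝒢.filter (fun g => ∀ i < n, g ≠ C i) ∧
      (nerve Ga).IsAcyclic ∧ (nerve Gb).IsAcyclic ∧
      (∀ g ∈ Ga, ∀ i < n, (g ∩ C i).Nonempty → i = 0) ∧
      (∀ g ∈ Gb, ∀ i < n, (g ∩ C i).Nonempty → i = n - 1) ∧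
      Disjoint (closure (⋃₀ (Ga : Set (Set X))))
        (closure (⋃₀ (Gb : Set (Set X)))) :=
  tree_cover_splits_off_free_chain_general G hG 𝒢 hopen hcover hnerve n C hmem hinj hlink hfree
end
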